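/- arXiv:2011.05430 — 5 statements merged into one kernel-verified Lean document; each statement's English description precedes it below -/
import Mathlib

section
/- Let R > 0 and let v : ℝ → ℝ be twice continuously differentiable with v'(u) ≤ 0 for all u ∈ [0,R]. Fix ε > 0 and let ρ : (0,∞) × ℝ → ℝ be twice continuously differentiable, taking values in [0,R], and satisfying for all (t,x): ∂_t ρ(t,x) + ∂_x ( ρ(t,x) · v(q(t,x)) ) = 0, where q(t,x) = ∫_x^∞ ε^{-1} e^{(x−y)/ε} ρ(t,y) dy. Then for every nonnegative test function φ ∈ C_c^∞((0,∞) × ℝ): 2 ∬ ( (ρ²/2) ∂_t φ + ψ(ρ) ∂_x φ ) dx dt ≥ ∬ ρ² ( v(ρ) − v(q) ) ∂_x φ dx dt + ∬ ( W(ρ) − W(q) ) ∂_x φ dx dt. -/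
open MeasureTheory Set

open MeasureTheory Set Real

lemma ker_eq (ε x : ℝ) (hε : 0 < ε) :
    (fun y => ε⁻¹ * Real.exp ((x - y)/ε)) =
      fun y => (ε⁻¹ * Real.exp (x/ε)) * Real.exp (-ε⁻¹ * y) := by
  funext y
  rw [mul_assoc, ← Real.exp_add]
  congr 2
  field_simp
  ring

lemma ker_integrableOn (ε x c : ℝ) (hε : 0 < ε) :
    IntegrableOn (fun y => ε⁻¹ * Real.exp ((x - y)/ε)) (Ioi c) := by
  rw [ker_eq ε x hε]
  exact (exp_neg_integrableOn_Ioi c (inv_pos.2 hε)).const_mul _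

lemma ker_integral_one (ε x : ℝ) (hε : 0 < ε) :
    ∫ y in Ioi x, ε⁻¹ * Real.exp ((x - y)/ε) = 1 := by
  have hder : ∀ y ∈ Ici x, HasDerivAt (fun y => -ε * (ε⁻¹ * Real.exp ((x - y)/ε)))
      (ε⁻¹ * Real.exp ((x - y)/ε)) y := by
    intro y _
    have h1 : HasDerivAt (fun y : ℝ => (x - y)/ε) (-ε⁻¹) y := by
      simpa [neg_div] using (((hasDerivAt_id y).const_sub x).div_const ε)
    have := (h1.exp.const_mul ε⁻¹).const_mul (-ε)
    refine this.congr_deriv ?_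
    field_simp
  have htend : Filter.Tendsto (fun y => -ε * (ε⁻¹ * Real.exp ((x - y)/ε))) Filter.atTop (nhds 0) := by
    have heq : (fun y => -ε * (ε⁻¹ * Real.exp ((x - y)/ε))) =
        fun y => (-ε * (ε⁻¹ * Real.exp (x/ε))) * Real.exp (-ε⁻¹ * y) := by
      funext y
      have := congrFun (ker_eq ε x hε) y
      rw [mul_assoc, this]
    rw [heq]
    have : Filter.Tendsto (fun y : ℝ => Real.exp (-ε⁻¹ * y)) Filter.atTop (nhds 0) := by
      apply Real.tendsto_exp_atBot.comp
      exact Filter.Tendsto.const_mul_atTop_of_neg (neg_lt_zero.2 (inv_pos.2 hε)) Filter.tendsto_id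
    simpa using (this.const_mul (-ε * (ε⁻¹ * Real.exp (x/ε))))
  have := integral_Ioi_of_hasDerivAt_of_tendsto' hder ((ker_integrableOn ε x x hε)) htend
  rw [this]
  simp [hε.ne']

lemma integral_Ioi_split (h : ℝ → ℝ) (hint : ∀ c : ℝ, IntegrableOn h (Ioi c)) (x : ℝ) :
    ∫ y in Ioi x, h y = (∫ y in Ioi 0, h y) - ∫ y in (0:ℝ)..x, h y := by
  have key : ∀ a b : ℝ, a ≤ b →
      ∫ y in Ioi a, h y = (∫ y in Ioc a b, h y) + ∫ y in Ioi b, h y := by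
    intro a b hab
    rw [← Set.Ioc_union_Ioi_eq_Ioi hab]
    exact setIntegral_union (Set.Ioc_disjoint_Ioi le_rfl) measurableSet_Ioi
      ((hint a).mono_set Set.Ioc_subset_Ioi_self) ((hint a).mono_set (Set.Ioi_subset_Ioi hab))
  rcases le_or_gt 0 x with hx | hx
  · rw [key 0 x hx, intervalIntegral.integral_of_le hx]
    ring
  · rw [key x 0 hx.le, intervalIntegral.integral_symm, intervalIntegral.integral_of_le hx.le]
    ring

lemma wker_integrableOn (ε x c : ℝ) (hε : 0 < ε) {r : ℝ → ℝ} (hr : Continuous r)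
    {R : ℝ} (hb : ∀ y, |r y| ≤ R) :
    IntegrableOn (fun y => ε⁻¹ * Real.exp ((x - y)/ε) * r y) (Ioi c) := by
  apply Integrable.mono ((ker_integrableOn ε x c hε).const_mul R)
  · exact (((continuous_const.mul (Real.continuous_exp.comp
      (by fun_prop))).mul hr)).aestronglyMeasurable
  · filter_upwards with y
    have h1 : (0:ℝ) ≤ ε⁻¹ * Real.exp ((x - y)/ε) :=
      mul_nonneg (inv_pos.2 hε).le (Real.exp_pos _).le
    have h2 : (0:ℝ) ≤ R := le_trans (abs_nonneg _) (hb c)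
    rw [norm_mul, Real.norm_eq_abs, Real.norm_eq_abs, abs_of_nonneg h1, Real.norm_eq_abs,
      abs_of_nonneg (by positivity : (0:ℝ) ≤ R * (ε⁻¹ * Real.exp ((x - y)/ε)))]
    calc ε⁻¹ * Real.exp ((x - y)/ε) * |r y| ≤ ε⁻¹ * Real.exp ((x - y)/ε) * R :=
          mul_le_mul_of_nonneg_left (hb y) h1
      _ = R * (ε⁻¹ * Real.exp ((x - y)/ε)) := by ring

lemma q_mem_Icc (ε x : ℝ) (hε : 0 < ε) {r : ℝ → ℝ} (hr : Continuous r)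
    {R : ℝ} (hb : ∀ y, r y ∈ Icc 0 R) :
    (∫ y in Ioi x, ε⁻¹ * Real.exp ((x - y)/ε) * r y) ∈ Icc (0:ℝ) R := by
  have hb' : ∀ y, |r y| ≤ R := fun y => abs_le.2 ⟨le_trans (by linarith [(hb y).1, (hb y).2]) (hb y).1, (hb y).2⟩
  constructor
  · apply setIntegral_nonneg measurableSet_Ioi
    intro y _
    have := (hb y).1
    positivity
  · have : ∫ y in Ioi x, ε⁻¹ * Real.exp ((x - y)/ε) * r y
        ≤ ∫ y in Ioi x, ε⁻¹ * Real.exp ((x - y)/ε) * R := by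
      apply setIntegral_mono_on (wker_integrableOn ε x x hε hr hb')
        (by exact (ker_integrableOn ε x x hε).mul_const R) measurableSet_Ioi
      intro y _
      have h1 : (0:ℝ) ≤ ε⁻¹ * Real.exp ((x - y)/ε) :=
        mul_nonneg (inv_pos.2 hε).le (Real.exp_pos _).le
      exact mul_le_mul_of_nonneg_left (hb y).2 h1
    rw [integral_mul_const, ker_integral_one ε x hε, one_mul] at this
    exact this

lemma g_integrableOn (ε c : ℝ) (hε : 0 < ε) {r : ℝ → ℝ} (hr : Continuous r)
    {R : ℝ} (hb : ∀ y, |r y| ≤ R) :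
    IntegrableOn (fun y => Real.exp (-y/ε) * r y) (Ioi c) := by
  have := wker_integrableOn ε 0 c hε hr hb
  have heq : (fun y => ε⁻¹ * Real.exp ((0 - y)/ε) * r y)
      = fun y => ε⁻¹ * (Real.exp (-y/ε) * r y) := by
    funext y; rw [zero_sub, neg_div]; ring
  rw [heq] at this
  simpa [hε.ne', IntegrableOn] using this.const_mul ε

lemma q_eq_rep (ε x : ℝ) (hε : 0 < ε) {r : ℝ → ℝ} (hr : Continuous r)
    {R : ℝ} (hb : ∀ y, |r y| ≤ R) :
    ∫ y in Ioi x, ε⁻¹ * Real.exp ((x - y)/ε) * r y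
      = (ε⁻¹ * Real.exp (x/ε)) *
        ((∫ y in Ioi 0, Real.exp (-y/ε) * r y) - ∫ y in (0:ℝ)..x, Real.exp (-y/ε) * r y) := by
  rw [← integral_Ioi_split _ (fun c => g_integrableOn ε c hε hr hb) x, ← integral_const_mul]
  apply setIntegral_congr_fun measurableSet_Ioi
  intro y _
  have : Real.exp ((x - y)/ε) = Real.exp (x/ε) * Real.exp (-y/ε) := by
    rw [← Real.exp_add]; congr 1; ring
  simp only []
  rw [this]; ring

lemma q_hasDerivAt (ε x : ℝ) (hε : 0 < ε) {r : ℝ → ℝ} (hr : Continuous r)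
    {R : ℝ} (hb : ∀ y, |r y| ≤ R) :
    HasDerivAt (fun x => ∫ y in Ioi x, ε⁻¹ * Real.exp ((x - y)/ε) * r y)
      (((∫ y in Ioi x, ε⁻¹ * Real.exp ((x - y)/ε) * r y) - r x)/ε) x := by
  have hrep : (fun x => ∫ y in Ioi x, ε⁻¹ * Real.exp ((x - y)/ε) * r y)
      = fun x => (ε⁻¹ * Real.exp (x/ε)) *
        ((∫ y in Ioi 0, Real.exp (-y/ε) * r y) - ∫ y in (0:ℝ)..x, Real.exp (-y/ε) * r y) := by
    funext x; exact q_eq_rep ε x hε hr hb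
  rw [hrep]
  set C : ℝ := ∫ y in Ioi 0, Real.exp (-y/ε) * r y with hC
  have h1 : HasDerivAt (fun x : ℝ => ε⁻¹ * Real.exp (x/ε)) (ε⁻¹ * (ε⁻¹ * Real.exp (x/ε))) x := by
    have : HasDerivAt (fun x : ℝ => x/ε) ε⁻¹ x := by
      simpa using (hasDerivAt_id x).div_const ε
    simpa [mul_comm] using (this.exp.const_mul ε⁻¹)
  have h2 : HasDerivAt (fun x => C - ∫ y in (0:ℝ)..x, Real.exp (-y/ε) * r y)
      (-(Real.exp (-x/ε) * r x)) x := by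
    apply HasDerivAt.const_sub
    apply intervalIntegral.integral_hasDerivAt_right
    · exact ((Real.continuous_exp.comp (by fun_prop)).mul hr).intervalIntegrable 0 x
    · exact ((Real.continuous_exp.comp (by fun_prop)).mul hr).stronglyMeasurableAtFilter _ _
    · exact ((Real.continuous_exp.comp (by fun_prop)).mul hr).continuousAt
  have := h1.mul h2
  refine this.congr_deriv ?_
  rw [q_eq_rep ε x hε hr hb, ← hC]
  have hexp : Real.exp (x/ε) * Real.exp (-x/ε) = 1 := by
    rw [← Real.exp_add]; simp [neg_div]
  have h3 : ε⁻¹ * Real.exp (x/ε) * -(Real.exp (-x/ε) * r x) = -(ε⁻¹ * r x) := by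
    linear_combination (-(ε⁻¹ * r x)) * hexp
  rw [h3, div_eq_mul_inv]
  ring

lemma bound_integrableOn (ε : ℝ) (hε : 0 < ε) (R : ℝ) :
    IntegrableOn (fun y => R * Real.exp (-y/ε)) (Ioi (0:ℝ)) := by
  have := g_integrableOn ε 0 hε (continuous_const : Continuous fun _ : ℝ => R)
    (R := |R|) (fun y => le_refl _)
  simpa [mul_comm] using this

lemma q_continuous (ε : ℝ) (hε : 0 < ε) (rr : ℝ × ℝ → ℝ) (hrr : Continuous rr)
    {R : ℝ} (hb : ∀ p, |rr p| ≤ R) :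
    Continuous fun p : ℝ × ℝ => ∫ y in Ioi p.2, ε⁻¹ * Real.exp ((p.2 - y)/ε) * rr (p.1, y) := by
  have hsl : ∀ t : ℝ, Continuous fun y => rr (t, y) := fun t => hrr.comp (Continuous.prodMk_right t)
  have hrep : (fun p : ℝ × ℝ => ∫ y in Ioi p.2, ε⁻¹ * Real.exp ((p.2 - y)/ε) * rr (p.1, y))
      = fun p : ℝ × ℝ => (ε⁻¹ * Real.exp (p.2/ε)) *
        ((∫ y in Ioi 0, Real.exp (-y/ε) * rr (p.1, y))
          - ∫ y in (0:ℝ)..p.2, Real.exp (-y/ε) * rr (p.1, y)) := by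
    funext p
    exact q_eq_rep ε p.2 hε (hsl p.1) (fun y => hb _)
  rw [hrep]
  have hΨ : Continuous fun t : ℝ => ∫ y in Ioi (0:ℝ), Real.exp (-y/ε) * rr (t, y) := by
    apply continuous_of_dominated (bound := fun y => R * Real.exp (-y/ε))
    · intro t
      exact ((Real.continuous_exp.comp (by fun_prop)).mul (hsl t)).aestronglyMeasurable
    · intro t
      filter_upwards with y
      rw [Real.norm_eq_abs, abs_mul, abs_of_nonneg (Real.exp_pos _).le, mul_comm R]
      exact mul_le_mul_of_nonneg_left (hb _) (Real.exp_pos _).le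
    · exact bound_integrableOn ε hε R
    · filter_upwards with y
      exact (Real.continuous_exp.comp (by fun_prop)).mul (hrr.comp (by fun_prop))
  have hJ : Continuous fun p : ℝ × ℝ => ∫ y in (0:ℝ)..p.2, Real.exp (-y/ε) * rr (p.1, y) := by
    have := intervalIntegral.continuous_parametric_primitive_of_continuous
      (μ := volume) (a₀ := (0:ℝ))
      (f := fun (t : ℝ) (y : ℝ) => Real.exp (-y/ε) * rr (t, y)) ?_
    · exact this
    · exact (Real.continuous_exp.comp (by fun_prop)).mul (hrr.comp (by fun_prop))
  exact (continuous_const.mul (Real.continuous_exp.comp (continuous_snd.div_const ε))).mul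
    ((hΨ.comp continuous_fst).sub hJ)


/-- For a solution `ρ` of the nonlocal equation `ρ_t + (ρ v(q))_x = 0` with exponential
kernel of width `ε`, and every nonnegative `φ ∈ C_c^∞((0,∞) × ℝ)`,
`2 ∬ ((ρ²/2) φ_t + ψ(ρ) φ_x) ≥ ∬ ρ² (v(ρ) - v(q)) φ_x + ∬ (W(ρ) - W(q)) φ_x`,
where `ψ(u) = ∫_0^u (s v(s) + s² v'(s)) ds` and `W(u) = ∫_0^u s² v'(s) ds`. -/
theorem entropy_inequality_fixed_epsilon
    (R : ℝ) (hR : 0 < R)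
    (v : ℝ → ℝ) (hv : ContDiff ℝ 2 v)
    (hv' : ∀ u ∈ Icc (0:ℝ) R, deriv v u ≤ 0)
    (ε : ℝ) (hε : 0 < ε)
    (ρ : ℝ → ℝ → ℝ)
    (hreg : ContDiffOn ℝ 2 (fun p : ℝ × ℝ => ρ p.1 p.2) (Ioi 0 ×ˢ univ))
    (hrange : ∀ t x : ℝ, 0 < t → ρ t x ∈ Icc (0:ℝ) R)
    (q : ℝ → ℝ → ℝ)
    (hq : ∀ t x : ℝ, q t x = ∫ y in Ioi x, ε⁻¹ * Real.exp ((x - y) / ε) * ρ t y)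
    (hpde : ∀ t x : ℝ, 0 < t →
      deriv (fun s => ρ s x) t + deriv (fun z => ρ t z * v (q t z)) x = 0) :
    ∀ φ : ℝ × ℝ → ℝ, ContDiff ℝ (⊤ : ℕ∞) φ → HasCompactSupport φ →
      tsupport φ ⊆ Ioi 0 ×ˢ univ → (∀ p, 0 ≤ φ p) →
      2 * ∫ p in Ioi (0:ℝ) ×ˢ (univ : Set ℝ),
            ((ρ p.1 p.2) ^ 2 / 2 * deriv (fun s => φ (s, p.2)) p.1
              + (∫ s in (0:ℝ)..(ρ p.1 p.2), (s * v s + s ^ 2 * deriv v s))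
                  * deriv (fun z => φ (p.1, z)) p.2)
        ≥ (∫ p in Ioi (0:ℝ) ×ˢ (univ : Set ℝ),
              (ρ p.1 p.2) ^ 2 * (v (ρ p.1 p.2) - v (q p.1 p.2))
                * deriv (fun z => φ (p.1, z)) p.2)
          + ∫ p in Ioi (0:ℝ) ×ˢ (univ : Set ℝ),
              ((∫ s in (0:ℝ)..(ρ p.1 p.2), s ^ 2 * deriv v s)
                - ∫ s in (0:ℝ)..(q p.1 p.2), s ^ 2 * deriv v s)
                * deriv (fun z => φ (p.1, z)) p.2 := by
  intro φ hφ hφc hφK hφ0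
  -- Basic setup
  have hOopen : IsOpen (Ioi (0:ℝ) ×ˢ (univ : Set ℝ)) := isOpen_Ioi.prod isOpen_univ
  have hOmeas : MeasurableSet (Ioi (0:ℝ) ×ˢ (univ : Set ℝ)) := hOopen.measurableSet
  -- lower bound on time coordinate of support
  obtain ⟨a, ha0, haK⟩ : ∃ a : ℝ, 0 < a ∧ ∀ p ∈ tsupport φ, a ≤ p.1 := by
    rcases (tsupport φ).eq_empty_or_nonempty with h | h
    · exact ⟨1, one_pos, by simp [h]⟩
    · obtain ⟨p₀, hp₀K, hmin⟩ := hφc.exists_isMinOn h continuous_fst.continuousOn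
      exact ⟨p₀.1, (hφK hp₀K).1, fun p hp => isMinOn_iff.1 hmin p hp⟩
  set c : ℝ := a/2 with hcdef
  have hc0 : 0 < c := by positivity
  have hca : c < a := by simp only [hcdef]; linarith
  have hmaxpos : ∀ t : ℝ, 0 < max t c := fun t => lt_of_lt_of_le hc0 (le_max_right t c)
  have hmaxK : ∀ p ∈ tsupport φ, max p.1 c = p.1 :=
    fun p hp => max_eq_left (le_trans hca.le (haK p hp))
  -- φ partial derivatives
  have hφdiff : Differentiable ℝ φ := hφ.differentiable (by simp)
  set φt : ℝ × ℝ → ℝ := fun p => fderiv ℝ φ p (1, 0) with hφtdef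
  set φx : ℝ × ℝ → ℝ := fun p => fderiv ℝ φ p (0, 1) with hφxdef
  have hφt_cont : Continuous φt := (hφ.continuous_fderiv (by simp)).clm_apply continuous_const
  have hφx_cont : Continuous φx := (hφ.continuous_fderiv (by simp)).clm_apply continuous_const
  have hφtd : ∀ t x : ℝ, HasDerivAt (fun s => φ (s, x)) (φt (t, x)) t := by
    intro t x
    exact (hφdiff (t, x)).hasFDerivAt.comp_hasDerivAt t
      ((hasDerivAt_id t).prodMk (hasDerivAt_const t x))
  have hφxd : ∀ t x : ℝ, HasDerivAt (fun z => φ (t, z)) (φx (t, x)) x := by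
    intro t x
    exact (hφdiff (t, x)).hasFDerivAt.comp_hasDerivAt x
      ((hasDerivAt_const x t).prodMk (hasDerivAt_id x))
  have hφ0' : ∀ p ∉ tsupport φ, φ p = 0 := fun p hp => image_eq_zero_of_notMem_tsupport hp
  have hφt0 : ∀ p ∉ tsupport φ, φt p = 0 := by
    intro p hp
    have h := Function.support_subset_iff'.1 (support_fderiv_subset ℝ (f := φ)) p hp
    simp [hφtdef, h]
  have hφx0 : ∀ p ∉ tsupport φ, φx p = 0 := by
    intro p hp
    have h := Function.support_subset_iff'.1 (support_fderiv_subset ℝ (f := φ)) p hp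
    simp [hφxdef, h]
  -- ρ partial derivatives
  set ρt : ℝ × ℝ → ℝ := fun p => fderiv ℝ (fun p : ℝ × ℝ => ρ p.1 p.2) p (1, 0) with hρtdef
  set ρx : ℝ × ℝ → ℝ := fun p => fderiv ℝ (fun p : ℝ × ℝ => ρ p.1 p.2) p (0, 1) with hρxdef
  have hρdiff : ∀ t x : ℝ, 0 < t → DifferentiableAt ℝ (fun p : ℝ × ℝ => ρ p.1 p.2) (t, x) := by
    intro t x ht
    exact (hreg.differentiableOn (by norm_num)).differentiableAt
      (hOopen.mem_nhds (by simp [ht]))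
  have hρtd : ∀ t x : ℝ, 0 < t → HasDerivAt (fun s => ρ s x) (ρt (t, x)) t := by
    intro t x ht
    exact (hρdiff t x ht).hasFDerivAt.comp_hasDerivAt t
      ((hasDerivAt_id t).prodMk (hasDerivAt_const t x))
  have hρxd : ∀ t x : ℝ, 0 < t → HasDerivAt (fun z => ρ t z) (ρx (t, x)) x := by
    intro t x ht
    exact (hρdiff t x ht).hasFDerivAt.comp_hasDerivAt x
      ((hasDerivAt_const x t).prodMk (hasDerivAt_id x))
  have hρt_cont : ContinuousOn ρt (Ioi (0:ℝ) ×ˢ (univ : Set ℝ)) :=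
    (hreg.continuousOn_fderiv_of_isOpen hOopen (by norm_num)).clm_apply continuousOn_const
  have hρx_cont : ContinuousOn ρx (Ioi (0:ℝ) ×ˢ (univ : Set ℝ)) :=
    (hreg.continuousOn_fderiv_of_isOpen hOopen (by norm_num)).clm_apply continuousOn_const
  have hρcont : ContinuousOn (fun p : ℝ × ℝ => ρ p.1 p.2) (Ioi (0:ℝ) ×ˢ (univ : Set ℝ)) :=
    hreg.continuousOn
  -- slice continuity and bounds for ρ
  have hρsl : ∀ t : ℝ, 0 < t → Continuous (fun y => ρ t y) := by
    intro t ht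
    refine hρcont.comp_continuous (Continuous.prodMk_right t) (fun y => by simp [ht])
  have hρb : ∀ t : ℝ, 0 < t → ∀ y : ℝ, |ρ t y| ≤ R := by
    intro t ht y
    obtain ⟨h1, h2⟩ := hrange t y ht
    rw [abs_of_nonneg h1]; exact h2
  -- q facts
  have hqIcc : ∀ t x : ℝ, 0 < t → q t x ∈ Icc (0:ℝ) R := by
    intro t x ht
    rw [hq t x]
    exact q_mem_Icc ε x hε (hρsl t ht) (fun y => hrange t y ht)
  have hqd : ∀ t x : ℝ, 0 < t → HasDerivAt (fun z => q t z) ((q t x - ρ t x)/ε) x := by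
    intro t x ht
    have h1 : (fun z => q t z) = fun z => ∫ y in Ioi z, ε⁻¹ * Real.exp ((z - y)/ε) * ρ t y := by
      funext z; exact hq t z
    rw [h1, hq t x]
    exact q_hasDerivAt ε x hε (hρsl t ht) (hρb t ht)
  -- clamped (hatted) functions
  set Ph : ℝ × ℝ → ℝ := fun p => ρ (max p.1 c) p.2 with hPhdef
  set Pth : ℝ × ℝ → ℝ := fun p => ρt (max p.1 c, p.2) with hPthdef
  set Pxh : ℝ × ℝ → ℝ := fun p => ρx (max p.1 c, p.2) with hPxhdef
  set Qh : ℝ × ℝ → ℝ := fun p => q (max p.1 c) p.2 with hQhdef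
  have hτcont : Continuous (fun p : ℝ × ℝ => ((max p.1 c, p.2) : ℝ × ℝ)) :=
    (continuous_fst.max continuous_const).prodMk continuous_snd
  have hτmem : ∀ p : ℝ × ℝ, ((max p.1 c, p.2) : ℝ × ℝ) ∈ Ioi (0:ℝ) ×ˢ (univ : Set ℝ) :=
    fun p => by simp [hmaxpos p.1]
  have hPh_cont : Continuous Ph := hρcont.comp_continuous hτcont hτmem
  have hPth_cont : Continuous Pth := hρt_cont.comp_continuous hτcont hτmem
  have hPxh_cont : Continuous Pxh := hρx_cont.comp_continuous hτcont hτmem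
  have hQh_cont : Continuous Qh := by
    have h1 : Qh = fun p : ℝ × ℝ =>
        ∫ y in Ioi p.2, ε⁻¹ * Real.exp ((p.2 - y)/ε) * ρ (max p.1 c) y := by
      funext p; exact hq _ _
    rw [h1]
    exact q_continuous ε hε (fun p => ρ (max p.1 c) p.2)
      (hPh_cont) (R := R) (fun p => hρb _ (hmaxpos p.1) p.2)
  have hPhIcc : ∀ p : ℝ × ℝ, Ph p ∈ Icc (0:ℝ) R := fun p => hrange _ _ (hmaxpos p.1)
  have hQhIcc : ∀ p : ℝ × ℝ, Qh p ∈ Icc (0:ℝ) R := fun p => hqIcc _ _ (hmaxpos p.1)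
  -- equalities on the support
  have hPhK : ∀ p ∈ tsupport φ, Ph p = ρ p.1 p.2 := by
    intro p hp; simp [hPhdef, hmaxK p hp]
  have hQhK : ∀ p ∈ tsupport φ, Qh p = q p.1 p.2 := by
    intro p hp; simp [hQhdef, hmaxK p hp]
  -- v facts
  have hvc : Continuous v := hv.continuous
  have hv'c : Continuous (deriv v) := hv.continuous_deriv (by norm_num)
  have hvd : ∀ u : ℝ, HasDerivAt v (deriv v u) u :=
    fun u => (hv.differentiable (by norm_num) u).hasDerivAt
  -- entropy flux primitives
  set Ψf : ℝ → ℝ := fun u => ∫ s in (0:ℝ)..u, (s * v s + s ^ 2 * deriv v s) with hΨdef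
  set Wf : ℝ → ℝ := fun u => ∫ s in (0:ℝ)..u, s ^ 2 * deriv v s with hWdef
  have hc1 : Continuous (fun s : ℝ => s * v s + s ^ 2 * deriv v s) := by fun_prop
  have hc2 : Continuous (fun s : ℝ => s ^ 2 * deriv v s) := by fun_prop
  have hΨd : ∀ u : ℝ, HasDerivAt Ψf (u * v u + u ^ 2 * deriv v u) u := by
    intro u
    exact intervalIntegral.integral_hasDerivAt_right (hc1.intervalIntegrable 0 u)
      (hc1.stronglyMeasurableAtFilter _ _) hc1.continuousAt
  have hWd : ∀ u : ℝ, HasDerivAt Wf (u ^ 2 * deriv v u) u := by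
    intro u
    exact intervalIntegral.integral_hasDerivAt_right (hc2.intervalIntegrable 0 u)
      (hc2.stronglyMeasurableAtFilter _ _) hc2.continuousAt
  have hΨc : Continuous Ψf := by
    rw [continuous_iff_continuousAt]; exact fun u => (hΨd u).continuousAt
  have hWc : Continuous Wf := by
    rw [continuous_iff_continuousAt]; exact fun u => (hWd u).continuousAt
    -- The four "hatted" integrands
  set Gh : ℝ × ℝ → ℝ := fun p =>
    2 * Ψf (Ph p) - Ph p ^ 2 * (v (Ph p) - v (Qh p)) - (Wf (Ph p) - Wf (Qh p)) with hGhdef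
  set H1 : ℝ × ℝ → ℝ := fun p => Ph p ^ 2 * φt p with hH1def
  set H2 : ℝ × ℝ → ℝ := fun p => Gh p * φx p with hH2def
  set H3 : ℝ × ℝ → ℝ := fun p => 2 * Ph p * Pth p * φ p with hH3def
  set H4 : ℝ × ℝ → ℝ := fun p =>
    (2 * Ph p * Pxh p * v (Qh p)
      + (Ph p ^ 2 + Qh p ^ 2) * deriv v (Qh p) * ((Qh p - Ph p)/ε)) * φ p with hH4def
  have hGh_cont : Continuous Gh := by
    apply Continuous.sub
    apply Continuous.sub
    · exact continuous_const.mul (hΨc.comp hPh_cont)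
    · exact ((hPh_cont.pow 2)).mul ((hvc.comp hPh_cont).sub (hvc.comp hQh_cont))
    · exact (hWc.comp hPh_cont).sub (hWc.comp hQh_cont)
  have hH1c : Continuous H1 := (hPh_cont.pow 2).mul hφt_cont
  have hH2c : Continuous H2 := hGh_cont.mul hφx_cont
  have hH3c : Continuous H3 := ((continuous_const.mul hPh_cont).mul hPth_cont).mul hφ.continuous
  have hH4c : Continuous H4 := by
    apply Continuous.mul _ hφ.continuous
    apply Continuous.add
    · exact ((continuous_const.mul hPh_cont).mul hPxh_cont).mul (hvc.comp hQh_cont)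
    · exact (((hPh_cont.pow 2).add (hQh_cont.pow 2)).mul (hv'c.comp hQh_cont)).mul
        ((hQh_cont.sub hPh_cont).div_const ε)
  -- compact supports
  have hφtcs : HasCompactSupport φt := HasCompactSupport.intro hφc hφt0
  have hφxcs : HasCompactSupport φx := HasCompactSupport.intro hφc hφx0
  have hH1cs : HasCompactSupport H1 := by
    apply HasCompactSupport.intro hφc
    intro p hp; simp [hH1def, hφt0 p hp]
  have hH2cs : HasCompactSupport H2 := by
    apply HasCompactSupport.intro hφc
    intro p hp; simp [hH2def, hφx0 p hp]
  have hH3cs : HasCompactSupport H3 := by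
    apply HasCompactSupport.intro hφc
    intro p hp; simp [hH3def, hφ0' p hp]
  have hH4cs : HasCompactSupport H4 := by
    apply HasCompactSupport.intro hφc
    intro p hp; simp [hH4def, hφ0' p hp]
  have hH1i : Integrable H1 := hH1c.integrable_of_hasCompactSupport hH1cs
  have hH2i : Integrable H2 := hH2c.integrable_of_hasCompactSupport hH2cs
  have hH3i : Integrable H3 := hH3c.integrable_of_hasCompactSupport hH3cs
  have hH4i : Integrable H4 := hH4c.integrable_of_hasCompactSupport hH4cs
  -- Step A : for each x, the t-integral of H1 + H3 vanishes
  have stepA : ∀ x : ℝ, ∫ t : ℝ, (H1 (t, x) + H3 (t, x)) = 0 := by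
    intro x
    have hd : ∀ t : ℝ, HasDerivAt (fun s => Ph (s, x) ^ 2 * φ (s, x))
        (H1 (t, x) + H3 (t, x)) t := by
      intro t
      rcases lt_or_ge t a with hta | hta
      · -- f vanishes near t
        have hev : (fun s => Ph (s, x) ^ 2 * φ (s, x)) =ᶠ[nhds t] (fun _ => (0:ℝ)) := by
          filter_upwards [Iio_mem_nhds hta] with s hs
          have : (s, x) ∉ tsupport φ := fun hmem => absurd (haK _ hmem) (not_le.2 hs)
          simp [hφ0' _ this]
        have h0 : H1 (t, x) + H3 (t, x) = 0 := by
          have hnot : (t, x) ∉ tsupport φ := fun hmem => absurd (haK _ hmem) (not_le.2 hta)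
          simp [hH1def, hH3def, hφ0' _ hnot, hφt0 _ hnot]
        rw [h0]
        exact (hasDerivAt_const t (0:ℝ)).congr_of_eventuallyEq hev
      · -- t > c : the hatted functions agree with the real ones near t
        have htc : c < t := lt_of_lt_of_le hca hta
        have ht0 : 0 < t := lt_trans hc0 htc
        have hg : HasDerivAt (fun s => (ρ s x) ^ 2 * φ (s, x))
            ((2 * ρ t x ^ 1 * ρt (t, x)) * φ (t, x) + ρ t x ^ 2 * φt (t, x)) t :=
          ((hρtd t x ht0).pow 2).mul (hφtd t x)
        have hev : (fun s => Ph (s, x) ^ 2 * φ (s, x)) =ᶠ[nhds t]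
            (fun s => (ρ s x) ^ 2 * φ (s, x)) := by
          filter_upwards [Ioi_mem_nhds htc] with s hs
          simp [hPhdef, max_eq_left (le_of_lt (mem_Ioi.1 hs))]
        have heq : H1 (t, x) + H3 (t, x)
            = (2 * ρ t x ^ 1 * ρt (t, x)) * φ (t, x) + ρ t x ^ 2 * φt (t, x) := by
          simp only [hH1def, hH3def, hPhdef, hPthdef, max_eq_left htc.le]
          ring
        rw [heq]
        exact hg.congr_of_eventuallyEq hev
    have hsupp : ∀ g : ℝ → ℝ, (∀ t1, ((t1 : ℝ), x) ∉ tsupport φ → g t1 = 0) →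
        HasCompactSupport g := by
      intro g hg
      have himg : IsCompact (Prod.fst '' tsupport φ) := hφc.image continuous_fst
      apply IsCompact.of_isClosed_subset himg isClosed_closure
      apply closure_minimal _ himg.isClosed
      intro t1 ht1
      rcases Classical.em ((t1, x) ∈ tsupport φ) with h | h
      · exact ⟨(t1, x), h, rfl⟩
      · exact absurd (hg t1 h) ht1
    have hfc : Continuous (fun s => Ph (s, x) ^ 2 * φ (s, x)) := by
      have h1 : Continuous (fun s : ℝ => ((s, x) : ℝ × ℝ)) := by fun_prop
      exact ((hPh_cont.comp h1).pow 2).mul (hφ.continuous.comp h1)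
    have hDc : Continuous (fun t => H1 (t, x) + H3 (t, x)) := by
      have h1 : Continuous (fun s : ℝ => ((s, x) : ℝ × ℝ)) := by fun_prop
      exact (hH1c.comp h1).add (hH3c.comp h1)
    have hfi : Integrable (fun s => Ph (s, x) ^ 2 * φ (s, x)) := by
      apply hfc.integrable_of_hasCompactSupport
      apply hsupp
      intro t1 h
      simp [hφ0' _ h]
    have hDi : Integrable (fun t => H1 (t, x) + H3 (t, x)) := by
      apply hDc.integrable_of_hasCompactSupport
      apply hsupp
      intro t1 h
      simp [hH1def, hH3def, hφ0' _ h, hφt0 _ h]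
    exact integral_eq_zero_of_hasDerivAt_of_integrable hd hDi hfi
  -- Step B : for each t, the x-integral of H2 + H4 vanishes
  have stepB : ∀ t : ℝ, ∫ x : ℝ, (H2 (t, x) + H4 (t, x)) = 0 := by
    intro t
    have ht' : 0 < max t c := hmaxpos t
    have hd : ∀ x : ℝ, HasDerivAt (fun z => Gh (t, z) * φ (t, z))
        (H2 (t, x) + H4 (t, x)) x := by
      intro x
      have hP : HasDerivAt (fun z => Ph (t, z)) (Pxh (t, x)) x := hρxd (max t c) x ht'
      have hQ : HasDerivAt (fun z => Qh (t, z)) ((Qh (t, x) - Ph (t, x))/ε) x :=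
        hqd (max t c) x ht'
      have hΨP : HasDerivAt (fun z => Ψf (Ph (t, z)))
          ((Ph (t, x) * v (Ph (t, x)) + Ph (t, x) ^ 2 * deriv v (Ph (t, x))) * Pxh (t, x)) x :=
        (hΨd _).comp x hP
      have hvP : HasDerivAt (fun z => v (Ph (t, z))) (deriv v (Ph (t, x)) * Pxh (t, x)) x :=
        (hvd _).comp x hP
      have hvQ : HasDerivAt (fun z => v (Qh (t, z)))
          (deriv v (Qh (t, x)) * ((Qh (t, x) - Ph (t, x))/ε)) x := (hvd _).comp x hQ
      have hWP : HasDerivAt (fun z => Wf (Ph (t, z)))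
          (Ph (t, x) ^ 2 * deriv v (Ph (t, x)) * Pxh (t, x)) x := (hWd _).comp x hP
      have hWQ : HasDerivAt (fun z => Wf (Qh (t, z)))
          (Qh (t, x) ^ 2 * deriv v (Qh (t, x)) * ((Qh (t, x) - Ph (t, x))/ε)) x :=
        (hWd _).comp x hQ
      have hGder : HasDerivAt (fun z => Gh (t, z))
          (2 * ((Ph (t, x) * v (Ph (t, x)) + Ph (t, x) ^ 2 * deriv v (Ph (t, x))) * Pxh (t, x))
            - ((2 * Ph (t, x) ^ 1 * Pxh (t, x)) * (v (Ph (t, x)) - v (Qh (t, x)))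
                + Ph (t, x) ^ 2 * (deriv v (Ph (t, x)) * Pxh (t, x)
                  - deriv v (Qh (t, x)) * ((Qh (t, x) - Ph (t, x))/ε)))
            - (Ph (t, x) ^ 2 * deriv v (Ph (t, x)) * Pxh (t, x)
                - Qh (t, x) ^ 2 * deriv v (Qh (t, x)) * ((Qh (t, x) - Ph (t, x))/ε))) x := by
        exact ((hΨP.const_mul 2).sub ((hP.pow 2).mul (hvP.sub hvQ))).sub (hWP.sub hWQ)
      have htot := hGder.mul (hφxd t x)
      have heq : H2 (t, x) + H4 (t, x) =
          (2 * ((Ph (t, x) * v (Ph (t, x)) + Ph (t, x) ^ 2 * deriv v (Ph (t, x))) * Pxh (t, x))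
            - ((2 * Ph (t, x) ^ 1 * Pxh (t, x)) * (v (Ph (t, x)) - v (Qh (t, x)))
                + Ph (t, x) ^ 2 * (deriv v (Ph (t, x)) * Pxh (t, x)
                  - deriv v (Qh (t, x)) * ((Qh (t, x) - Ph (t, x))/ε)))
            - (Ph (t, x) ^ 2 * deriv v (Ph (t, x)) * Pxh (t, x)
                - Qh (t, x) ^ 2 * deriv v (Qh (t, x)) * ((Qh (t, x) - Ph (t, x))/ε))) * φ (t, x)
            + Gh (t, x) * φx (t, x) := by
        simp only [hH2def, hH4def]
        ring
      rw [heq]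
      exact htot
    have hsupp : ∀ g : ℝ → ℝ, (∀ x1, ((t : ℝ), x1) ∉ tsupport φ → g x1 = 0) →
        HasCompactSupport g := by
      intro g hg
      have himg : IsCompact (Prod.snd '' tsupport φ) := hφc.image continuous_snd
      apply IsCompact.of_isClosed_subset himg isClosed_closure
      apply closure_minimal _ himg.isClosed
      intro x1 hx1
      rcases Classical.em ((t, x1) ∈ tsupport φ) with h | h
      · exact ⟨(t, x1), h, rfl⟩
      · exact absurd (hg x1 h) hx1
    have h1 : Continuous (fun z : ℝ => ((t, z) : ℝ × ℝ)) := by fun_prop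
    have hfi : Integrable (fun z => Gh (t, z) * φ (t, z)) := by
      apply Continuous.integrable_of_hasCompactSupport
        ((hGh_cont.comp h1).mul (hφ.continuous.comp h1))
      apply hsupp
      intro x1 h
      simp [hφ0' _ h]
    have hDi : Integrable (fun x => H2 (t, x) + H4 (t, x)) := by
      apply Continuous.integrable_of_hasCompactSupport ((hH2c.comp h1).add (hH4c.comp h1))
      apply hsupp
      intro x1 h
      simp [hH2def, hH4def, hφ0' _ h, hφx0 _ h]
    exact integral_eq_zero_of_hasDerivAt_of_integrable hd hDi hfi
  -- Step C : ∫ (H1 + H3) = 0 over the plane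
  have stepC : ∫ p : ℝ × ℝ, (H1 p + H3 p) = 0 := by
    have hi : Integrable (fun p : ℝ × ℝ => H1 p + H3 p) := hH1i.add hH3i
    rw [MeasureTheory.Measure.volume_eq_prod] at hi ⊢
    rw [integral_prod_symm _ hi]
    simp only [stepA, integral_zero]
  -- Step D : ∫ (H2 + H4) = 0 over the plane
  have stepD : ∫ p : ℝ × ℝ, (H2 p + H4 p) = 0 := by
    have hi : Integrable (fun p : ℝ × ℝ => H2 p + H4 p) := hH2i.add hH4i
    rw [MeasureTheory.Measure.volume_eq_prod] at hi ⊢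
    rw [integral_prod _ hi]
    simp only [stepB, integral_zero]
  -- Step E : pointwise sign H3 + H4 ≤ 0
  have stepE : ∀ p : ℝ × ℝ, H3 p + H4 p ≤ 0 := by
    rintro ⟨t, x⟩
    rcases Classical.em ((t, x) ∈ tsupport φ) with hp | hp
    · have ht0 : 0 < t := lt_of_lt_of_le ha0 (haK _ hp)
      have hmax : max t c = t := hmaxK _ hp
      -- identify the time derivative via the PDE
      have hd1 : deriv (fun s => ρ s x) t = ρt (t, x) := (hρtd t x ht0).deriv
      have hd2 : deriv (fun z => ρ t z * v (q t z)) x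
          = ρx (t, x) * v (q t x) + ρ t x * (deriv v (q t x) * ((q t x - ρ t x)/ε)) :=
        ((hρxd t x ht0).mul ((hvd _).comp x (hqd t x ht0))).deriv
      have hpde' := hpde t x ht0
      rw [hd1, hd2] at hpde'
      have hrt : ρt (t, x)
          = -(ρx (t, x) * v (q t x) + ρ t x * (deriv v (q t x) * ((q t x - ρ t x)/ε))) := by
        linarith
      have hkey : H3 (t, x) + H4 (t, x)
          = (((q t x + ρ t x) * (q t x - ρ t x) ^ 2 * deriv v (q t x)) / ε) * φ (t, x) := by
        simp only [hH3def, hH4def, hPhdef, hPthdef, hPxhdef, hQhdef, hmax, hrt]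
        field_simp
        ring
      rw [hkey]
      have hq1 := hqIcc t x ht0
      have hr1 := hrange t x ht0
      have hA : 0 ≤ (q t x + ρ t x) * (q t x - ρ t x) ^ 2 := by
        apply mul_nonneg _ (sq_nonneg _)
        linarith [hq1.1, hr1.1]
      have hB : (q t x + ρ t x) * (q t x - ρ t x) ^ 2 * deriv v (q t x) ≤ 0 :=
        mul_nonpos_of_nonneg_of_nonpos hA (hv' _ hq1)
      exact mul_nonpos_of_nonpos_of_nonneg (div_nonpos_of_nonpos_of_nonneg hB hε.le) (hφ0 _)
    · simp [hH3def, hH4def, hφ0' _ hp]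
  -- hatted versions of the goal integrands
  set X : ℝ × ℝ → ℝ := fun p => Ph p ^ 2 / 2 * φt p + Ψf (Ph p) * φx p with hXdef
  set Y : ℝ × ℝ → ℝ := fun p => Ph p ^ 2 * (v (Ph p) - v (Qh p)) * φx p with hYdef
  set Z : ℝ × ℝ → ℝ := fun p => (Wf (Ph p) - Wf (Qh p)) * φx p with hZdef
  have hXc : Continuous X :=
    (((hPh_cont.pow 2).div_const 2).mul hφt_cont).add ((hΨc.comp hPh_cont).mul hφx_cont)
  have hYc : Continuous Y :=
    ((hPh_cont.pow 2).mul ((hvc.comp hPh_cont).sub (hvc.comp hQh_cont))).mul hφx_cont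
  have hZc : Continuous Z :=
    ((hWc.comp hPh_cont).sub (hWc.comp hQh_cont)).mul hφx_cont
  have hXi : Integrable X := by
    apply hXc.integrable_of_hasCompactSupport
    apply HasCompactSupport.intro hφc
    intro p hp; simp [hXdef, hφt0 _ hp, hφx0 _ hp]
  have hYi : Integrable Y := by
    apply hYc.integrable_of_hasCompactSupport
    apply HasCompactSupport.intro hφc
    intro p hp; simp [hYdef, hφx0 _ hp]
  have hZi : Integrable Z := by
    apply hZc.integrable_of_hasCompactSupport
    apply HasCompactSupport.intro hφc
    intro p hp; simp [hZdef, hφx0 _ hp]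
  -- derivatives appearing in the goal are φt and φx
  have hdt : ∀ p : ℝ × ℝ, deriv (fun s => φ (s, p.2)) p.1 = φt p := by
    intro p
    have := (hφtd p.1 p.2).deriv
    simpa using this
  have hdx : ∀ p : ℝ × ℝ, deriv (fun z => φ (p.1, z)) p.2 = φx p := by
    intro p
    have := (hφxd p.1 p.2).deriv
    simpa using this
  -- the goal integrands agree with the hatted ones everywhere
  have hXeq : ∀ p : ℝ × ℝ,
      (ρ p.1 p.2) ^ 2 / 2 * deriv (fun s => φ (s, p.2)) p.1
        + (∫ s in (0:ℝ)..(ρ p.1 p.2), (s * v s + s ^ 2 * deriv v s))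
            * deriv (fun z => φ (p.1, z)) p.2 = X p := by
    intro p
    rw [hdt p, hdx p]
    rcases Classical.em (p ∈ tsupport φ) with hp | hp
    · simp only [hXdef, hPhK p hp, hΨdef]
    · simp [hXdef, hφt0 _ hp, hφx0 _ hp]
  have hYeq : ∀ p : ℝ × ℝ,
      (ρ p.1 p.2) ^ 2 * (v (ρ p.1 p.2) - v (q p.1 p.2))
        * deriv (fun z => φ (p.1, z)) p.2 = Y p := by
    intro p
    rw [hdx p]
    rcases Classical.em (p ∈ tsupport φ) with hp | hp
    · simp only [hYdef, hPhK p hp, hQhK p hp]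
    · simp [hYdef, hφx0 _ hp]
  have hZeq : ∀ p : ℝ × ℝ,
      ((∫ s in (0:ℝ)..(ρ p.1 p.2), s ^ 2 * deriv v s)
        - ∫ s in (0:ℝ)..(q p.1 p.2), s ^ 2 * deriv v s)
        * deriv (fun z => φ (p.1, z)) p.2 = Z p := by
    intro p
    rw [hdx p]
    rcases Classical.em (p ∈ tsupport φ) with hp | hp
    · simp only [hZdef, hPhK p hp, hQhK p hp, hWdef]
    · simp [hZdef, hφx0 _ hp]
  -- convert the set integrals into integrals over the plane
  have hnotO : ∀ p : ℝ × ℝ, p ∉ Ioi (0:ℝ) ×ˢ (univ : Set ℝ) → p ∉ tsupport φ :=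
    fun p hp hmem => hp (hφK hmem)
  have hIX : (∫ p in Ioi (0:ℝ) ×ˢ (univ : Set ℝ),
      ((ρ p.1 p.2) ^ 2 / 2 * deriv (fun s => φ (s, p.2)) p.1
        + (∫ s in (0:ℝ)..(ρ p.1 p.2), (s * v s + s ^ 2 * deriv v s))
            * deriv (fun z => φ (p.1, z)) p.2)) = ∫ p : ℝ × ℝ, X p := by
    rw [setIntegral_congr_fun hOmeas (fun p _ => hXeq p)]
    exact setIntegral_eq_integral_of_forall_compl_eq_zero
      (fun p hp => by simp [hXdef, hφt0 _ (hnotO p hp), hφx0 _ (hnotO p hp)])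
  have hIY : (∫ p in Ioi (0:ℝ) ×ˢ (univ : Set ℝ),
      (ρ p.1 p.2) ^ 2 * (v (ρ p.1 p.2) - v (q p.1 p.2))
        * deriv (fun z => φ (p.1, z)) p.2) = ∫ p : ℝ × ℝ, Y p := by
    rw [setIntegral_congr_fun hOmeas (fun p _ => hYeq p)]
    exact setIntegral_eq_integral_of_forall_compl_eq_zero
      (fun p hp => by simp [hYdef, hφx0 _ (hnotO p hp)])
  have hIZ : (∫ p in Ioi (0:ℝ) ×ˢ (univ : Set ℝ),
      ((∫ s in (0:ℝ)..(ρ p.1 p.2), s ^ 2 * deriv v s)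
        - ∫ s in (0:ℝ)..(q p.1 p.2), s ^ 2 * deriv v s)
        * deriv (fun z => φ (p.1, z)) p.2) = ∫ p : ℝ × ℝ, Z p := by
    rw [setIntegral_congr_fun hOmeas (fun p _ => hZeq p)]
    exact setIntegral_eq_integral_of_forall_compl_eq_zero
      (fun p hp => by simp [hZdef, hφx0 _ (hnotO p hp)])
  -- combine everything
  have hkey : ∫ p : ℝ × ℝ, (H1 p + H2 p)
      = 2 * (∫ p : ℝ × ℝ, X p) - (∫ p : ℝ × ℝ, Y p) - ∫ p : ℝ × ℝ, Z p := by
    have hfun : (fun p : ℝ × ℝ => H1 p + H2 p) = fun p => 2 * X p - Y p - Z p := by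
      funext p
      simp only [hH1def, hH2def, hGhdef, hXdef, hYdef, hZdef]
      ring
    have i2X : Integrable (fun p : ℝ × ℝ => 2 * X p) := hXi.const_mul 2
    have i2XY : Integrable (fun p : ℝ × ℝ => 2 * X p - Y p) := i2X.sub hYi
    rw [hfun, integral_sub i2XY hZi, integral_sub i2X hYi, integral_const_mul]
  have hpos : 0 ≤ ∫ p : ℝ × ℝ, (H1 p + H2 p) := by
    have h13 : (∫ p : ℝ × ℝ, H1 p) + ∫ p : ℝ × ℝ, H3 p = 0 := by
      rw [← integral_add hH1i hH3i]; exact stepC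
    have h24 : (∫ p : ℝ × ℝ, H2 p) + ∫ p : ℝ × ℝ, H4 p = 0 := by
      rw [← integral_add hH2i hH4i]; exact stepD
    have h34 : ∫ p : ℝ × ℝ, (H3 p + H4 p) ≤ 0 := integral_nonpos (fun p => stepE p)
    rw [integral_add hH3i hH4i] at h34
    rw [integral_add hH1i hH2i]
    linarith
  rw [ge_iff_le, hIX, hIY, hIZ]
  linarith
end

section
/- Let R > 0 and let v : ℝ → ℝ be continuously differentiable with v'(u) ≤ 0 for all u ∈ [0,R]. Let ε > 0 and let q : ℝ → ℝ be twice continuously differentiable with values in [0,R], and set ρ(x) = q(x) − ε q'(x); assume ρ also takes values in [0,R]. Then for every nonnegative φ ∈ C_c^1(ℝ): 2 ∫ ρ(x) · d/dx [ ρ(x) ( v(ρ(x)) − v(q(x)) ) ] · φ(x) dx ≤ − ∫ ρ(x)² ( v(ρ(x)) − v(q(x)) ) φ'(x) dx − ∫ ( W(ρ(x)) − W(q(x)) ) φ'(x) dx. -/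
open MeasureTheory Set

/-!
With `F = ρ² (v(ρ) - v(q)) + W(ρ) - W(q)` one computes
`2 ρ (ρ (v(ρ) - v(q)))' = F' + (q² - ρ²) v'(q) q'`.
Since `q - ρ = ε q'`, the defect equals `ε (q + ρ) q'² v'(q) ≤ 0`, so after multiplying by
`φ ≥ 0` and integrating, the claim is the integration by parts `∫ F' φ = - ∫ F φ'`.
-/

/-- The function `W` of the statement. -/
noncomputable def weightedPrimitive (v : ℝ → ℝ) (u : ℝ) : ℝ := ∫ s in (0:ℝ)..u, s ^ 2 * deriv v s

noncomputable def relativeFlux (v : ℝ → ℝ) (a b : ℝ) : ℝ :=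
  a ^ 2 * (v a - v b) + (weightedPrimitive v a - weightedPrimitive v b)

theorem integrable_mul_of_hasCompactSupport {f g : ℝ → ℝ} (hf : Continuous f)
    (hg : Continuous g) (hgs : HasCompactSupport g) : Integrable (fun x => f x * g x) :=
  (hf.mul hg).integrable_of_hasCompactSupport hgs.mul_left

theorem integral_mul_deriv_eq_neg_of_hasCompactSupport {f g : ℝ → ℝ} (hf : ContDiff ℝ 1 f)
    (hg : ContDiff ℝ 1 g) (hgs : HasCompactSupport g) :
    ∫ x, f x * deriv g x = -∫ x, deriv f x * g x :=
  integral_mul_deriv_eq_deriv_mul_of_integrable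
    (fun x _ => (hf.differentiable one_ne_zero x).hasDerivAt)
    (fun x _ => (hg.differentiable one_ne_zero x).hasDerivAt)
    (integrable_mul_of_hasCompactSupport hf.continuous hg.continuous_deriv_one hgs.deriv)
    (integrable_mul_of_hasCompactSupport hf.continuous_deriv_one hg.continuous hgs)
    (integrable_mul_of_hasCompactSupport hf.continuous hg.continuous hgs)

theorem integral_mul_le_neg_integral_mul_deriv {f F φ : ℝ → ℝ} (hf : Continuous f)
    (hF : ContDiff ℝ 1 F) (hφ : ContDiff ℝ 1 φ) (hφs : HasCompactSupport φ)
    (hφ0 : ∀ x, 0 ≤ φ x) (hfF : ∀ x, f x ≤ deriv F x) :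
    ∫ x, f x * φ x ≤ -∫ x, F x * deriv φ x := by
  rw [integral_mul_deriv_eq_neg_of_hasCompactSupport hF hφ hφs, neg_neg]
  exact integral_mono (integrable_mul_of_hasCompactSupport hf hφ.continuous hφs)
    (integrable_mul_of_hasCompactSupport hF.continuous_deriv_one hφ.continuous hφs)
    fun x => mul_le_mul_of_nonneg_right (hfF x) (hφ0 x)

section

variable {v : ℝ → ℝ}

theorem hasDerivAt_weightedPrimitive (hv : Continuous (deriv v)) (u : ℝ) :
    HasDerivAt (weightedPrimitive v) (u ^ 2 * deriv v u) u :=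
  have hc : Continuous fun s : ℝ => s ^ 2 * deriv v s := (continuous_pow 2).mul hv
  intervalIntegral.integral_hasDerivAt_right (hc.intervalIntegrable _ _)
    (hc.stronglyMeasurableAtFilter _ _) hc.continuousAt

theorem contDiff_weightedPrimitive (hv : Continuous (deriv v)) :
    ContDiff ℝ 1 (weightedPrimitive v) := by
  have hd := hasDerivAt_weightedPrimitive hv
  refine contDiff_one_iff_deriv.mpr ⟨fun u => (hd u).differentiableAt, ?_⟩
  rw [funext fun u => (hd u).deriv]
  exact (continuous_pow 2).mul hv

theorem ContDiff.relativeFlux (hv : ContDiff ℝ 1 v) {a b : ℝ → ℝ} (ha : ContDiff ℝ 1 a)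
    (hb : ContDiff ℝ 1 b) : ContDiff ℝ 1 fun x => relativeFlux v (a x) (b x) := by
  have hW := contDiff_weightedPrimitive hv.continuous_deriv_one
  exact (ha.pow 2).mul ((hv.comp ha).sub (hv.comp hb)) |>.add
    ((hW.comp ha).sub (hW.comp hb))

variable {a b : ℝ → ℝ}

theorem integral_relativeFlux_mul (hv : ContDiff ℝ 1 v) (ha : Continuous a) (hb : Continuous b)
    {ψ : ℝ → ℝ} (hψ : Continuous ψ) (hψs : HasCompactSupport ψ) :
    ∫ x, relativeFlux v (a x) (b x) * ψ x =
      (∫ x, a x ^ 2 * (v (a x) - v (b x)) * ψ x) +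
        ∫ x, (weightedPrimitive v (a x) - weightedPrimitive v (b x)) * ψ x := by
  have hW := (contDiff_weightedPrimitive hv.continuous_deriv_one).continuous
  have hA : Integrable fun x => a x ^ 2 * (v (a x) - v (b x)) * ψ x :=
    integrable_mul_of_hasCompactSupport
      ((ha.pow 2).mul ((hv.continuous.comp ha).sub (hv.continuous.comp hb))) hψ hψs
  have hB : Integrable fun x => (weightedPrimitive v (a x) - weightedPrimitive v (b x)) * ψ x :=
    integrable_mul_of_hasCompactSupport ((hW.comp ha).sub (hW.comp hb)) hψ hψs
  rw [← integral_add hA hB]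
  simp only [relativeFlux, add_mul]

variable {a' b' x : ℝ}

theorem hasDerivAt_mul_sub_comp (hv : Differentiable ℝ v) (ha : HasDerivAt a a' x)
    (hb : HasDerivAt b b' x) :
    HasDerivAt (fun z => a z * (v (a z) - v (b z)))
      (a' * (v (a x) - v (b x)) + a x * (deriv v (a x) * a' - deriv v (b x) * b')) x :=
  ha.mul (((hv _).hasDerivAt.comp x ha).sub ((hv _).hasDerivAt.comp x hb))

theorem hasDerivAt_relativeFlux (hv : ContDiff ℝ 1 v) (ha : HasDerivAt a a' x)
    (hb : HasDerivAt b b' x) :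
    HasDerivAt (fun z => relativeFlux v (a z) (b z))
      (2 * a x * (a' * (v (a x) - v (b x)) + a x * (deriv v (a x) * a' - deriv v (b x) * b'))
        + (a x ^ 2 - b x ^ 2) * deriv v (b x) * b') x := by
  have hvd := hv.differentiable one_ne_zero
  have hW := hasDerivAt_weightedPrimitive hv.continuous_deriv_one
  have h := (ha.mul (hasDerivAt_mul_sub_comp hvd ha hb)).add
    (((hW _).comp x ha).sub ((hW _).comp x hb))
  have hF : (fun z => relativeFlux v (a z) (b z)) = (a * fun z => a z * (v (a z) - v (b z))) +
      (weightedPrimitive v ∘ a - weightedPrimitive v ∘ b) := by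
    ext z
    simp only [relativeFlux, Pi.add_apply, Pi.mul_apply, Pi.sub_apply, Function.comp_apply]
    ring
  rw [hF]
  exact h.congr_deriv (by ring)

end

theorem sq_sub_sq_mul_mul_nonneg {q q' ε d : ℝ} (hq : 0 ≤ q) (hρ : 0 ≤ q - ε * q')
    (hε : 0 ≤ ε) (hd : d ≤ 0) : 0 ≤ ((q - ε * q') ^ 2 - q ^ 2) * d * q' := by
  have h : ((q - ε * q') ^ 2 - q ^ 2) * q' = -(ε * (q + (q - ε * q')) * q' ^ 2) := by ring
  rw [mul_right_comm, h]
  exact mul_nonneg_of_nonpos_of_nonpos (neg_nonpos.mpr (by positivity)) hd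

theorem two_mul_deriv_le_deriv_relativeFlux {v ρ q : ℝ → ℝ} {ε x : ℝ}
    (hv : ContDiff ℝ 1 v) (hρ : DifferentiableAt ℝ ρ x) (hq : DifferentiableAt ℝ q x)
    (hρq : ρ x = q x - ε * deriv q x) (hε : 0 ≤ ε) (hρ0 : 0 ≤ ρ x) (hq0 : 0 ≤ q x)
    (hv' : deriv v (q x) ≤ 0) :
    2 * ρ x * deriv (fun z => ρ z * (v (ρ z) - v (q z))) x
      ≤ deriv (fun z => relativeFlux v (ρ z) (q z)) x := by
  rw [(hasDerivAt_mul_sub_comp (hv.differentiable one_ne_zero) hρ.hasDerivAt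
    hq.hasDerivAt).deriv, (hasDerivAt_relativeFlux hv hρ.hasDerivAt hq.hasDerivAt).deriv]
  have hdefect := sq_sub_sq_mul_mul_nonneg hq0 (hρq ▸ hρ0) hε hv'
  rw [← hρq] at hdefect
  linarith

theorem key_integral_estimate_general
    (R : ℝ)
    (v : ℝ → ℝ) (hv : ContDiff ℝ 1 v)
    (hv' : ∀ u ∈ Icc (0:ℝ) R, deriv v u ≤ 0)
    (ε : ℝ) (hε : 0 < ε)
    (q : ℝ → ℝ) (hq : ContDiff ℝ 2 q) (hqr : ∀ x, q x ∈ Icc (0:ℝ) R)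
    (ρ : ℝ → ℝ) (hρ : ∀ x, ρ x = q x - ε * deriv q x)
    (hρr : ∀ x, ρ x ∈ Icc (0:ℝ) R)
    (φ : ℝ → ℝ) (hφ : ContDiff ℝ 1 φ) (hφs : HasCompactSupport φ)
    (hφ0 : ∀ x, 0 ≤ φ x) :
    2 * ∫ x : ℝ, ρ x * deriv (fun z => ρ z * (v (ρ z) - v (q z))) x * φ x
      ≤ - (∫ x : ℝ, (ρ x) ^ 2 * (v (ρ x) - v (q x)) * deriv φ x)
        - ∫ x : ℝ, ((∫ s in (0:ℝ)..(ρ x), s ^ 2 * deriv v s)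
            - ∫ s in (0:ℝ)..(q x), s ^ 2 * deriv v s) * deriv φ x := by
  have hq1 : ContDiff ℝ 1 q := hq.of_le (by norm_num)
  have hρ1 : ContDiff ℝ 1 ρ := by
    rw [funext hρ]
    exact hq1.sub (contDiff_const.mul (hq.deriv' (n := 1)))
  set g := fun z => ρ z * (v (ρ z) - v (q z))
  set F := fun x => relativeFlux v (ρ x) (q x)
  have hg : ContDiff ℝ 1 g := hρ1.mul ((hv.comp hρ1).sub (hv.comp hq1))
  have hF : ContDiff ℝ 1 F := hv.relativeFlux hρ1 hq1
  calc 2 * ∫ x, ρ x * deriv g x * φ x = ∫ x, 2 * ρ x * deriv g x * φ x := by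
        rw [← integral_const_mul]; simp only [mul_assoc]
    _ ≤ -∫ x, F x * deriv φ x :=
        integral_mul_le_neg_integral_mul_deriv
          ((continuous_const.mul hρ1.continuous).mul hg.continuous_deriv_one) hF hφ hφs hφ0
          fun x => two_mul_deriv_le_deriv_relativeFlux hv (hρ1.differentiable one_ne_zero x)
            (hq1.differentiable one_ne_zero x) (hρ x) hε.le (hρr x).1 (hqr x).1 (hv' _ (hqr x))
    _ = -((∫ x, ρ x ^ 2 * (v (ρ x) - v (q x)) * deriv φ x) +
          ∫ x, (weightedPrimitive v (ρ x) - weightedPrimitive v (q x)) * deriv φ x) :=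
        congrArg Neg.neg (integral_relativeFlux_mul hv hρ1.continuous hq1.continuous
          hφ.continuous_deriv_one hφs.deriv)
    _ = _ := neg_add' _ _

/-- Key integral estimate: with `ρ = q - ε q'` and `v' ≤ 0` on `[0,R]`, for every
nonnegative `φ ∈ C_c¹(ℝ)`,
`2 ∫ ρ (ρ (v(ρ) - v(q)))' φ ≤ - ∫ ρ² (v(ρ) - v(q)) φ' - ∫ (W(ρ) - W(q)) φ'`,
where `W(u) = ∫_0^u s² v'(s) ds`. -/
theorem key_integral_estimate
    (R : ℝ) (hR : 0 < R)
    (v : ℝ → ℝ) (hv : ContDiff ℝ 1 v)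
    (hv' : ∀ u ∈ Icc (0:ℝ) R, deriv v u ≤ 0)
    (ε : ℝ) (hε : 0 < ε)
    (q : ℝ → ℝ) (hq : ContDiff ℝ 2 q) (hqr : ∀ x, q x ∈ Icc (0:ℝ) R)
    (ρ : ℝ → ℝ) (hρ : ∀ x, ρ x = q x - ε * deriv q x)
    (hρr : ∀ x, ρ x ∈ Icc (0:ℝ) R)
    (φ : ℝ → ℝ) (hφ : ContDiff ℝ 1 φ) (hφs : HasCompactSupport φ)
    (hφ0 : ∀ x, 0 ≤ φ x) :
    2 * ∫ x : ℝ, ρ x * deriv (fun z => ρ z * (v (ρ z) - v (q z))) x * φ x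
      ≤ - (∫ x : ℝ, (ρ x) ^ 2 * (v (ρ x) - v (q x)) * deriv φ x)
        - ∫ x : ℝ, ((∫ s in (0:ℝ)..(ρ x), s ^ 2 * deriv v s)
            - ∫ s in (0:ℝ)..(q x), s ^ 2 * deriv v s) * deriv φ x :=
  key_integral_estimate_general R v hv hv' ε hε q hq hqr ρ hρ hρr φ hφ hφs hφ0
end

section
/- Let v : ℝ → ℝ be continuously differentiable, and let ρ, q : Ω → ℝ be continuously differentiable functions on an open set Ω ⊆ ℝ² (with coordinates (t,x)) such that ∂_t ρ + ∂_x ( ρ · v(q) ) = 0 on Ω. Then at every point of Ω: ∂_t ( ρ²/2 ) + ∂_x ( ψ(ρ) ) = ρ · ∂_x [ ρ ( v(ρ) − v(q) ) ], where ψ(u) = ∫_0^u ( s v(s) + s² v'(s) ) ds. -/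
/-!
The flux `ψ(u) = ∫₀ᵘ (s v(s) + s² v'(s)) ds` satisfies `ψ'(u) = u (u v(u))'`, so by the chain rule
`ψ(ρ)_x = ρ (ρ v(ρ))_x`, while `(ρ²/2)_t = ρ ρ_t`. Hence the left-hand side equals
`ρ (ρ_t + (ρ v(q))_x) + ρ (ρ (v(ρ) - v(q)))_x`, and the first term vanishes by the equation.
-/

section Partial

variable {𝕜 E F G : Type*} [NontriviallyNormedField 𝕜]
  [NormedAddCommGroup E] [NormedSpace 𝕜 E] [NormedAddCommGroup F] [NormedSpace 𝕜 F]
  [NormedAddCommGroup G] [NormedSpace 𝕜 G]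

theorem DifferentiableAt.of_uncurry_left {f : E → F → G} {a : E} {b : F}
    (h : DifferentiableAt 𝕜 (Function.uncurry f) (a, b)) :
    DifferentiableAt 𝕜 (fun x => f x b) a :=
  DifferentiableAt.comp (g := Function.uncurry f) (f := fun x => (x, b)) a h
    (differentiableAt_id.prodMk (differentiableAt_const b))

theorem DifferentiableAt.of_uncurry_right {f : E → F → G} {a : E} {b : F}
    (h : DifferentiableAt 𝕜 (Function.uncurry f) (a, b)) :
    DifferentiableAt 𝕜 (fun y => f a y) b :=
  DifferentiableAt.comp (g := Function.uncurry f) (f := fun y => (a, y)) b h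
    ((differentiableAt_const a).prodMk differentiableAt_id)

end Partial

noncomputable def entropyFlux (v : ℝ → ℝ) (u : ℝ) : ℝ :=
  ∫ s in (0 : ℝ)..u, (s * v s + s ^ 2 * deriv v s)

theorem hasDerivAt_entropyFlux {v : ℝ → ℝ} (hv : Continuous v) (hv' : Continuous (deriv v))
    (u : ℝ) : HasDerivAt (entropyFlux v) (u * v u + u ^ 2 * deriv v u) u := by
  have hint : Continuous fun s : ℝ => s * v s + s ^ 2 * deriv v s := by fun_prop
  exact intervalIntegral.integral_hasDerivAt_right (hint.intervalIntegrable _ _)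
    (hint.stronglyMeasurableAtFilter _ _) hint.continuousAt

/-- Entropy production identity: if `ρ_t + (ρ v(q))_x = 0` on an open set `Ω`, then
`(ρ²/2)_t + ψ(ρ)_x = ρ ⬝ (ρ (v(ρ) - v(q)))_x` on `Ω`, where
`ψ(u) = ∫_0^u (s v(s) + s² v'(s)) ds`. -/
theorem entropy_production_identity
    (v : ℝ → ℝ) (hv : ContDiff ℝ 1 v)
    (Ω : Set (ℝ × ℝ)) (hΩ : IsOpen Ω)
    (ρ q : ℝ → ℝ → ℝ)
    (hρ : ContDiffOn ℝ 1 (fun p : ℝ × ℝ => ρ p.1 p.2) Ω)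
    (hq : ContDiffOn ℝ 1 (fun p : ℝ × ℝ => q p.1 p.2) Ω)
    (hpde : ∀ p ∈ Ω,
      deriv (fun t => ρ t p.2) p.1 + deriv (fun x => ρ p.1 x * v (q p.1 x)) p.2 = 0) :
    ∀ p ∈ Ω,
      deriv (fun t => (ρ t p.2) ^ 2 / 2) p.1
        + deriv (fun x => ∫ s in (0:ℝ)..(ρ p.1 x), (s * v s + s ^ 2 * deriv v s)) p.2
      = ρ p.1 p.2 * deriv (fun x => ρ p.1 x * (v (ρ p.1 x) - v (q p.1 x))) p.2 := by
  rintro ⟨t, x⟩ hp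
  have hρd := (hρ.contDiffAt (hΩ.mem_nhds hp)).differentiableAt one_ne_zero
  have hqd := (hq.contDiffAt (hΩ.mem_nhds hp)).differentiableAt one_ne_zero
  have hρt := hρd.of_uncurry_left.hasDerivAt
  have hρx := hρd.of_uncurry_right.hasDerivAt
  have hqx := hqd.of_uncurry_right.hasDerivAt
  have hvρ := (hv.differentiable one_ne_zero (ρ t x)).hasDerivAt.comp x hρx
  have hvq := (hv.differentiable one_ne_zero (q t x)).hasDerivAt.comp x hqx
  have hflux : HasDerivAt (fun y => entropyFlux v (ρ t y)) _ x :=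
    (hasDerivAt_entropyFlux hv.continuous (hv.continuous_deriv le_rfl) (ρ t x)).comp x hρx
  have hsquare : HasDerivAt (fun s => ρ s x ^ 2 / 2) _ t := (hρt.pow 2).div_const 2
  have hpdeFlux : HasDerivAt (fun y => ρ t y * v (q t y)) _ x := hρx.mul hvq
  have hrhs : HasDerivAt (fun y => ρ t y * (v (ρ t y) - v (q t y))) _ x := hρx.mul (hvρ.sub hvq)
  have hpde := hpde (t, x) hp
  dsimp only at hpde ⊢
  rw [hpdeFlux.deriv] at hpde
  change _ + deriv (fun y => entropyFlux v (ρ t y)) x = _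
  rw [hsquare.deriv, hflux.deriv, hrhs.deriv]
  linear_combination ρ t x * hpde
end

section
/- Let R > 0, let (ε_n) be a sequence of positive reals with ε_n → 0, and let ρ_n, ρ : ℝ → ℝ be measurable functions with values in [0,R] such that ρ_n → ρ in L¹_loc(ℝ), i.e. ∫_K |ρ_n − ρ| → 0 for every compact K ⊂ ℝ. Define q_n(x) = ∫_x^∞ ε_n^{-1} e^{(x−y)/ε_n} ρ_n(y) dy. Then q_n → ρ in L¹_loc(ℝ). -/
/-!
Approximate `ρ` in `L¹` near `K` by a continuous compactly supported `g` and split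
`q_n - ρ = q_{ε_n}[ρ_n - g] + (q_{ε_n}[g] - g) + (g - ρ)`. By Fubini and
`∫_{-∞}^y ε⁻¹ e^{(x-y)/ε} dx = 1`, the operator `q_ε` is an `L¹` contraction up to the mass it
pulls back from far to the right, which is `O(e^{-1/ε})` on a bounded set; so the first term is
controlled by `∫ |ρ_n - ρ| + ∫ |ρ - g|`. The second term tends to `0` by dominated convergence,
since `q_ε[g] → g` pointwise for continuous `g`.
-/

open MeasureTheory Set Filter Topology

lemma integrableOn_of_abs_le {f : ℝ → ℝ} (hf : Measurable f) {C : ℝ} (hfC : ∀ y, |f y| ≤ C)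
    {s : Set ℝ} (hs : volume s ≠ ⊤) : IntegrableOn f s :=
  Measure.integrableOn_of_bounded hs hf.aestronglyMeasurable
    (ae_of_all _ fun y => (Real.norm_eq_abs _).trans_le (hfC y))

lemma setIntegral_abs_sub_le_add {f g h : ℝ → ℝ} (hf : Measurable f) (hg : Measurable g)
    (hh : Measurable h) {C : ℝ} (hfC : ∀ y, |f y| ≤ C) (hgC : ∀ y, |g y| ≤ C)
    (hhC : ∀ y, |h y| ≤ C) {s : Set ℝ} (hs : volume s ≠ ⊤) :
    ∫ x in s, |f x - h x| ≤ (∫ x in s, |f x - g x|) + ∫ x in s, |g x - h x| := by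
  have hint : ∀ {u v : ℝ → ℝ}, Measurable u → Measurable v → (∀ y, |u y| ≤ C) →
      (∀ y, |v y| ≤ C) → IntegrableOn (fun x => |u x - v x|) s := fun hu hv huC hvC =>
    ((integrableOn_of_abs_le hu huC hs).sub (integrableOn_of_abs_le hv hvC hs)).abs
  rw [← integral_add (hint hf hg hfC hgC) (hint hg hh hgC hhC)]
  exact integral_mono_of_nonneg (ae_of_all _ fun x => abs_nonneg _)
    ((hint hf hg hfC hgC).add (hint hg hh hgC hhC)) (ae_of_all _ fun x => abs_sub_le _ _ _)

lemma tendsto_exp_neg_div_nhdsGT_zero {c : ℝ} (hc : 0 < c) :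
    Tendsto (fun ε => Real.exp (-c / ε)) (𝓝[>] 0) (𝓝 0) :=
  Real.tendsto_exp_atBot.comp <| (tendsto_inv_nhdsGT_zero.const_mul_atTop_of_neg
    (neg_neg_of_pos hc)).congr fun _ => (div_eq_mul_inv _ _).symm

lemma tendsto_zero_of_forall_le_add {ι : Type*} {l : Filter ι} {u : ι → ℝ} (hu : ∀ i, 0 ≤ u i)
    (h : ∀ δ > 0, ∃ v : ι → ℝ, Tendsto v l (𝓝 0) ∧ ∀ i, u i ≤ v i + δ) :
    Tendsto u l (𝓝 0) := by
  refine Metric.tendsto_nhds.2 fun δ hδ => ?_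
  obtain ⟨v, hv, huv⟩ := h (δ / 2) (half_pos hδ)
  filter_upwards [hv.eventually (gt_mem_nhds (half_pos hδ))] with i hi
  rw [Real.dist_eq, sub_zero, abs_of_nonneg (hu i)]
  linarith [huv i]

noncomputable section

def expKernel (ε x y : ℝ) : ℝ := ε⁻¹ * Real.exp ((x - y) / ε)

def expAverage (ε : ℝ) (f : ℝ → ℝ) (x : ℝ) : ℝ := ∫ y in Ioi x, expKernel ε x y * f y

end

section ExpKernel

variable {ε : ℝ}

lemma expKernel_nonneg (hε : 0 < ε) (x y : ℝ) : 0 ≤ expKernel ε x y := by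
  unfold expKernel; positivity

lemma expKernel_le_inv (hε : 0 < ε) {x y : ℝ} (hxy : x ≤ y) : expKernel ε x y ≤ ε⁻¹ := by
  unfold expKernel
  refine mul_le_of_le_one_right (inv_nonneg.2 hε.le) (Real.exp_le_one_iff.2 ?_)
  exact div_nonpos_of_nonpos_of_nonneg (by linarith) hε.le

lemma measurable_expKernel : Measurable fun p : ℝ × ℝ => expKernel ε p.1 p.2 := by
  unfold expKernel; fun_prop

lemma expKernel_eq_mul_exp_neg_mul (hε : 0 < ε) (x y : ℝ) :
    expKernel ε x y = ε⁻¹ * Real.exp (x / ε) * Real.exp (-ε⁻¹ * y) := by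
  rw [expKernel, mul_assoc, ← Real.exp_add]
  congr 2
  field_simp
  ring

lemma expKernel_eq_mul_exp_inv_mul (hε : 0 < ε) (x y : ℝ) :
    expKernel ε x y = ε⁻¹ * Real.exp (-y / ε) * Real.exp (ε⁻¹ * x) := by
  rw [expKernel, mul_assoc, ← Real.exp_add]
  congr 2
  field_simp
  ring

lemma integrableOn_expKernel_Ioi (hε : 0 < ε) (x c : ℝ) :
    IntegrableOn (expKernel ε x) (Ioi c) := by
  simp_rw [funext (expKernel_eq_mul_exp_neg_mul hε x)]
  exact (integrableOn_exp_mul_Ioi (neg_lt_zero.2 (inv_pos.2 hε)) c).const_mul _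

lemma integral_expKernel_Ioi (hε : 0 < ε) (x c : ℝ) :
    ∫ y in Ioi c, expKernel ε x y = Real.exp ((x - c) / ε) := by
  simp_rw [expKernel_eq_mul_exp_neg_mul hε x]
  rw [integral_const_mul, integral_exp_mul_Ioi (neg_lt_zero.2 (inv_pos.2 hε))]
  field_simp
  rw [← Real.exp_add]
  ring_nf

lemma integrableOn_expKernel_Iio (hε : 0 < ε) (y c : ℝ) :
    IntegrableOn (fun x => expKernel ε x y) (Iio c) := by
  simp_rw [expKernel_eq_mul_exp_inv_mul hε _ y]
  exact ((integrableOn_exp_mul_Iic (inv_pos.2 hε) c).mono_set Iio_subset_Iic_self).const_mul _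

lemma integral_expKernel_Iio (hε : 0 < ε) (y : ℝ) :
    ∫ x in Iio y, expKernel ε x y = 1 := by
  simp_rw [expKernel_eq_mul_exp_inv_mul hε _ y]
  rw [integral_const_mul, ← integral_Iic_eq_integral_Iio, integral_exp_mul_Iic (inv_pos.2 hε)]
  field_simp
  rw [← Real.exp_add]
  ring_nf
  simp

end ExpKernel

section ExpAverage

variable {ε : ℝ}

lemma integrableOn_expKernel_mul (hε : 0 < ε) {f : ℝ → ℝ} (hf : Measurable f) {C : ℝ}
    (hfC : ∀ y, |f y| ≤ C) (x : ℝ) :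
    IntegrableOn (fun y => expKernel ε x y * f y) (Ioi x) :=
  (integrableOn_expKernel_Ioi hε x x).mul_bdd hf.aestronglyMeasurable
    (ae_of_all _ fun y => (Real.norm_eq_abs _).trans_le (hfC y))

lemma expAverage_eq_integral_indicator (f : ℝ → ℝ) (x : ℝ) :
    expAverage ε f x =
      ∫ y, {p : ℝ × ℝ | p.1 < p.2}.indicator (fun p => expKernel ε p.1 p.2 * f p.2) (x, y) := by
  rw [expAverage, ← integral_indicator measurableSet_Ioi]
  rfl

lemma measurable_indicator_expKernel_mul {f : ℝ → ℝ} (hf : Measurable f) :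
    Measurable ({p : ℝ × ℝ | p.1 < p.2}.indicator fun p => expKernel ε p.1 p.2 * f p.2) :=
  (measurable_expKernel.mul (hf.comp measurable_snd)).indicator
    (measurableSet_lt measurable_fst measurable_snd)

lemma measurable_expAverage {f : ℝ → ℝ} (hf : Measurable f) : Measurable (expAverage ε f) := by
  rw [funext (expAverage_eq_integral_indicator (ε := ε) f)]
  exact ((measurable_indicator_expKernel_mul hf).stronglyMeasurable.integral_prod_right'
    (ν := volume)).measurable

lemma expAverage_const (hε : 0 < ε) (C x : ℝ) : expAverage ε (fun _ => C) x = C := by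
  rw [expAverage, integral_mul_const, integral_expKernel_Ioi hε, sub_self, zero_div,
    Real.exp_zero, one_mul]

lemma expAverage_sub {f g : ℝ → ℝ} {x : ℝ}
    (hf : IntegrableOn (fun y => expKernel ε x y * f y) (Ioi x))
    (hg : IntegrableOn (fun y => expKernel ε x y * g y) (Ioi x)) :
    expAverage ε (fun y => f y - g y) x = expAverage ε f x - expAverage ε g x := by
  simp_rw [expAverage, mul_sub]
  exact integral_sub hf hg

lemma abs_expAverage_le_expAverage_abs (hε : 0 < ε) (f : ℝ → ℝ) (x : ℝ) :
    |expAverage ε f x| ≤ expAverage ε (fun y => |f y|) x := by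
  refine (abs_integral_le_integral_abs).trans_eq (integral_congr_ae (ae_of_all _ fun y => ?_))
  simp only [abs_mul, abs_of_nonneg (expKernel_nonneg hε x y)]

lemma abs_expAverage_le (hε : 0 < ε) {f : ℝ → ℝ} (hf : Measurable f) {C : ℝ}
    (hfC : ∀ y, |f y| ≤ C) (x : ℝ) : |expAverage ε f x| ≤ C := by
  refine (abs_expAverage_le_expAverage_abs hε f x).trans ?_
  rw [← expAverage_const hε C x]
  refine setIntegral_mono_on (integrableOn_expKernel_mul hε hf.abs (by simpa using hfC) x)
    ((integrableOn_expKernel_Ioi hε x x).mul_const C) measurableSet_Ioi fun y _ => ?_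
  exact mul_le_mul_of_nonneg_left (hfC y) (expKernel_nonneg hε x y)

lemma integrableOn_expAverage (hε : 0 < ε) {f : ℝ → ℝ} (hf : Measurable f) {C : ℝ}
    (hfC : ∀ y, |f y| ≤ C) {s : Set ℝ} (hs : volume s ≠ ⊤) : IntegrableOn (expAverage ε f) s :=
  integrableOn_of_abs_le (measurable_expAverage hf) (abs_expAverage_le hε hf hfC) hs

lemma expAverage_indicator_Ioi (hε : 0 < ε) {x c : ℝ} (hxc : x ≤ c) (C : ℝ) :
    expAverage ε ((Ioi c).indicator fun _ => C) x = C * Real.exp ((x - c) / ε) := by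
  have hk : ∀ y, expKernel ε x y * (Ioi c).indicator (fun _ => C) y
      = (Ioi c).indicator (fun y => expKernel ε x y * C) y := fun y => by
    by_cases hy : y ∈ Ioi c <;> simp [hy]
  simp_rw [expAverage, hk, setIntegral_indicator measurableSet_Ioi,
    Ioi_inter_Ioi, max_eq_right hxc, integral_mul_const, integral_expKernel_Ioi hε, mul_comm]

lemma expAverage_le_add_of_le_add_indicator (hε : 0 < ε) {f g : ℝ → ℝ} {x c C : ℝ}
    (hf : IntegrableOn (fun y => expKernel ε x y * f y) (Ioi x))
    (hg : IntegrableOn (fun y => expKernel ε x y * g y) (Ioi x)) (hxc : x ≤ c)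
    (hfg : ∀ y, x < y → f y ≤ g y + (Ioi c).indicator (fun _ => C) y) :
    expAverage ε f x ≤ expAverage ε g x + C * Real.exp ((x - c) / ε) := by
  have htail := integrableOn_expKernel_mul hε
    ((measurable_const (a := C)).indicator (measurableSet_Ioi (a := c))) (C := |C|)
    (fun y => norm_indicator_le_norm_self (fun _ => C) y) x
  rw [← expAverage_indicator_Ioi hε hxc, expAverage, expAverage, expAverage,
    ← integral_add hg htail]
  refine setIntegral_mono_on hf (hg.add htail) measurableSet_Ioi fun y hy => ?_
  rw [← mul_add]
  exact mul_le_mul_of_nonneg_left (hfg y hy) (expKernel_nonneg hε x y)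

lemma abs_expAverage_sub_expAverage_le (hε : 0 < ε) {f g : ℝ → ℝ} (hf : Measurable f)
    (hg : Measurable g) {C : ℝ} (hfC : ∀ y, |f y| ≤ C) (hgC : ∀ y, |g y| ≤ C) (x : ℝ) :
    |expAverage ε f x - expAverage ε g x| ≤ expAverage ε (fun y => |f y - g y|) x := by
  rw [← expAverage_sub (integrableOn_expKernel_mul hε hf hfC x)
    (integrableOn_expKernel_mul hε hg hgC x)]
  exact abs_expAverage_le_expAverage_abs hε _ x

end ExpAverage

section Fubini

variable {ε : ℝ}

lemma setIntegral_expAverage_le_integral (hε : 0 < ε) {W : ℝ → ℝ} (hW : Measurable W)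
    (hW0 : 0 ≤ W) (hWi : Integrable W) {s : Set ℝ} (hs : volume s ≠ ⊤) :
    ∫ x in s, expAverage ε W x ≤ ∫ y, W y := by
  have : IsFiniteMeasure (volume.restrict s) := isFiniteMeasure_restrict.2 hs
  set F : ℝ × ℝ → ℝ := {p : ℝ × ℝ | p.1 < p.2}.indicator (fun p => expKernel ε p.1 p.2 * W p.2)
  have hF_nonneg : ∀ p, 0 ≤ F p := fun p =>
    indicator_nonneg (fun p _ => mul_nonneg (expKernel_nonneg hε _ _) (hW0 _)) p
  have hF_int : Integrable F ((volume.restrict s).prod volume) := by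
    refine Integrable.mono' ((integrable_const ε⁻¹).mul_prod hWi)
      (measurable_indicator_expKernel_mul hW).aestronglyMeasurable (ae_of_all _ fun p => ?_)
    rw [Real.norm_eq_abs, abs_of_nonneg (hF_nonneg p)]
    by_cases hp : p.1 < p.2
    · simp only [F, indicator_of_mem (show p ∈ {p : ℝ × ℝ | p.1 < p.2} from hp)]
      exact mul_le_mul_of_nonneg_right (expKernel_le_inv hε hp.le) (hW0 _)
    · simp only [F, indicator_of_notMem (show p ∉ {p : ℝ × ℝ | p.1 < p.2} from hp)]
      exact mul_nonneg (inv_nonneg.2 hε.le) (hW0 _)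
  have hinner : ∀ y, ∫ x in s, F (x, y) ≤ W y := fun y => by
    have hFy : ∀ x, F (x, y) = (Iio y).indicator (fun x => expKernel ε x y) x * W y := fun x => by
      by_cases hx : x < y <;> simp [F, hx]
    have hki : Integrable ((Iio y).indicator fun x => expKernel ε x y) :=
      (integrable_indicator_iff measurableSet_Iio).2 (integrableOn_expKernel_Iio hε y y)
    simp_rw [hFy, integral_mul_const]
    refine mul_le_of_le_one_left (hW0 y) ?_
    calc ∫ x in s, (Iio y).indicator (fun x => expKernel ε x y) x
        ≤ ∫ x, (Iio y).indicator (fun x => expKernel ε x y) x :=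
          setIntegral_le_integral hki
            (ae_of_all _ (indicator_nonneg fun x _ => expKernel_nonneg hε x y))
      _ = 1 := by rw [integral_indicator measurableSet_Iio, integral_expKernel_Iio hε]
  calc ∫ x in s, expAverage ε W x = ∫ x in s, ∫ y, F (x, y) := by
        simp_rw [expAverage_eq_integral_indicator]; rfl
    _ = ∫ y, ∫ x in s, F (x, y) := integral_integral_swap hF_int
    _ ≤ ∫ y, W y := integral_mono_of_nonneg
        (ae_of_all _ fun y => integral_nonneg fun x => hF_nonneg _) hWi (ae_of_all _ hinner)

lemma setIntegral_expAverage_le (hε : 0 < ε) {W : ℝ → ℝ} (hW : Measurable W) (hW0 : 0 ≤ W)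
    {C : ℝ} (hWC : ∀ y, W y ≤ C) {a b h : ℝ} (hh : 0 ≤ h) {s : Set ℝ} (hs : MeasurableSet s)
    (hsab : s ⊆ Icc a b) :
    ∫ x in s, expAverage ε W x
      ≤ (∫ y in Icc a (b + h), W y) + volume.real s * (C * Real.exp (-h / ε)) := by
  have hs_fin : volume s ≠ ⊤ := (measure_mono hsab).trans_lt measure_Icc_lt_top |>.ne
  have hW_abs : ∀ y, |W y| ≤ C := fun y => (abs_of_nonneg (hW0 y)).trans_le (hWC y)
  set W' := (Icc a (b + h)).indicator W
  have hW' : Measurable W' := hW.indicator measurableSet_Icc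
  have hW'_abs : ∀ y, |W' y| ≤ C := fun y =>
    (norm_indicator_le_norm_self W y).trans (hW_abs y)
  have hpt : ∀ x ∈ s, expAverage ε W x ≤ expAverage ε W' x + C * Real.exp (-h / ε) := by
    intro x hx
    obtain ⟨hax, hxb⟩ := hsab hx
    refine (expAverage_le_add_of_le_add_indicator hε (integrableOn_expKernel_mul hε hW hW_abs x)
      (integrableOn_expKernel_mul hε hW' hW'_abs x) (c := b + h) (C := C) (by linarith)
      fun y hy => ?_).trans ?_
    · by_cases hyb : y ≤ b + h
      · simp [W', indicator_of_mem (show y ∈ Icc a (b + h) from ⟨by linarith, hyb⟩),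
          indicator_of_notMem (show y ∉ Ioi (b + h) from not_lt.2 hyb)]
      · simp [W', indicator_of_mem (show y ∈ Ioi (b + h) from not_le.1 hyb),
          indicator_of_notMem (show y ∉ Icc a (b + h) from fun hy' => hyb hy'.2), hWC y]
    · gcongr
      · exact (hW_abs 0).trans' (abs_nonneg _)
      · linarith
  calc ∫ x in s, expAverage ε W x
      ≤ ∫ x in s, (expAverage ε W' x + C * Real.exp (-h / ε)) :=
        setIntegral_mono_on (integrableOn_expAverage hε hW hW_abs hs_fin)
          ((integrableOn_expAverage hε hW' hW'_abs hs_fin).add (integrableOn_const hs_fin)) hs hpt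
    _ = (∫ x in s, expAverage ε W' x) + volume.real s * (C * Real.exp (-h / ε)) := by
        rw [integral_add (integrableOn_expAverage hε hW' hW'_abs hs_fin)
          (integrableOn_const hs_fin), setIntegral_const, smul_eq_mul]
    _ ≤ (∫ y in Icc a (b + h), W y) + volume.real s * (C * Real.exp (-h / ε)) := by
        gcongr
        rw [← integral_indicator measurableSet_Icc]
        exact setIntegral_expAverage_le_integral hε hW' (indicator_nonneg fun y _ => hW0 y)
          ((integrable_indicator_iff measurableSet_Icc).2
            (integrableOn_of_abs_le hW hW_abs measure_Icc_lt_top.ne)) hs_fin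

end Fubini

section Approximation

variable {ε : ℝ}

lemma abs_expAverage_sub_self_le (hε : 0 < ε) {g : ℝ → ℝ} (hg : Measurable g) {C : ℝ}
    (hgC : ∀ y, |g y| ≤ C) {x η δ : ℝ} (hη : 0 ≤ η)
    (hmod : ∀ y ∈ Icc x (x + η), |g y - g x| ≤ δ) :
    |expAverage ε g x - g x| ≤ δ + 2 * C * Real.exp (-η / ε) := by
  have hδ : 0 ≤ δ := (abs_nonneg _).trans (hmod x ⟨le_rfl, by linarith⟩)
  have hdiff : ∀ y, |g y - g x| ≤ 2 * C := fun y => by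
    linarith [abs_sub (g y) (g x), hgC y, hgC x]
  calc |expAverage ε g x - g x|
      = |expAverage ε g x - expAverage ε (fun _ => g x) x| := by rw [expAverage_const hε]
    _ ≤ expAverage ε (fun y => |g y - g x|) x :=
        abs_expAverage_sub_expAverage_le hε hg measurable_const hgC (fun _ => hgC x) x
    _ ≤ expAverage ε (fun _ => δ) x + 2 * C * Real.exp ((x - (x + η)) / ε) := by
        refine expAverage_le_add_of_le_add_indicator hε
          (integrableOn_expKernel_mul hε (hg.sub measurable_const).abs
            (fun y => (abs_abs _).trans_le (hdiff y)) x)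
          ((integrableOn_expKernel_Ioi hε x x).mul_const δ) (by linarith) fun y hxy => ?_
        by_cases hy : y ≤ x + η
        · simpa [indicator_of_notMem (show y ∉ Ioi (x + η) from not_lt.2 hy)]
            using hmod y ⟨hxy.le, hy⟩
        · simp only [indicator_of_mem (show y ∈ Ioi (x + η) from not_le.1 hy)]
          linarith [hdiff y]
    _ = δ + 2 * C * Real.exp (-η / ε) := by
        rw [expAverage_const hε, sub_add_cancel_left]

lemma tendsto_expAverage_of_continuousAt {g : ℝ → ℝ} (hg : Measurable g) {C : ℝ}
    (hgC : ∀ y, |g y| ≤ C) {x : ℝ} (hgx : ContinuousAt g x) :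
    Tendsto (fun ε => expAverage ε g x) (𝓝[>] 0) (𝓝 (g x)) := by
  refine Metric.tendsto_nhds.2 fun δ hδ => ?_
  obtain ⟨η, hη, hball⟩ := Metric.continuousAt_iff.1 hgx (δ / 2) (half_pos hδ)
  have hmod : ∀ y ∈ Icc x (x + η / 2), |g y - g x| ≤ δ / 2 := fun y hy => by
    refine (hball ?_).le
    rw [Real.dist_eq, abs_of_nonneg (by linarith [hy.1])]
    linarith [hy.2]
  have htail : ∀ᶠ ε in 𝓝[>] 0, 2 * C * Real.exp (-(η / 2) / ε) < δ / 2 := by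
    have := (tendsto_exp_neg_div_nhdsGT_zero (half_pos hη)).const_mul (2 * C)
    rw [mul_zero] at this
    exact this.eventually (gt_mem_nhds (half_pos hδ))
  filter_upwards [htail, self_mem_nhdsWithin] with ε hε_tail hε
  rw [Real.dist_eq]
  linarith [abs_expAverage_sub_self_le hε hg hgC (half_pos hη).le hmod]

lemma tendsto_setIntegral_abs_expAverage_sub {g : ℝ → ℝ} (hg : Continuous g) {C : ℝ}
    (hgC : ∀ y, |g y| ≤ C) {s : Set ℝ} (hs : volume s ≠ ⊤) :
    Tendsto (fun ε => ∫ x in s, |expAverage ε g x - g x|) (𝓝[>] 0) (𝓝 0) := by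
  have : IsFiniteMeasure (volume.restrict s) := isFiniteMeasure_restrict.2 hs
  simpa using tendsto_integral_filter_of_dominated_convergence (l := 𝓝[>] (0 : ℝ))
    (F := fun ε x => |expAverage ε g x - g x|) (f := fun _ => 0) (fun _ => 2 * C)
    (Eventually.of_forall fun ε =>
      (((measurable_expAverage hg.measurable).sub hg.measurable).abs :
        Measurable fun x => |expAverage ε g x - g x|).aestronglyMeasurable)
    (eventually_mem_nhdsWithin.mono fun ε (hε : 0 < ε) => ae_of_all _ fun x => by
      rw [Real.norm_eq_abs, abs_abs]
      linarith [abs_sub (expAverage ε g x) (g x), abs_expAverage_le hε hg.measurable hgC x,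
        hgC x])
    (integrable_const _)
    (ae_of_all _ fun x => by
      simpa using ((tendsto_expAverage_of_continuousAt hg.measurable hgC
        hg.continuousAt (x := x)).sub_const (g x)).abs)

end Approximation

lemma setIntegral_abs_expAverage_sub_le {ε : ℝ} (hε : 0 < ε) {f ρ g : ℝ → ℝ} (hf : Measurable f)
    (hρ : Measurable ρ) (hg : Measurable g) {C : ℝ} (hfC : ∀ y, |f y| ≤ C)
    (hρC : ∀ y, |ρ y| ≤ C) (hgC : ∀ y, |g y| ≤ C) {a b : ℝ} {s : Set ℝ} (hs : MeasurableSet s)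
    (hsab : s ⊆ Icc a b) :
    ∫ x in s, |expAverage ε f x - ρ x|
      ≤ (∫ y in Icc a (b + 1), |f y - ρ y|) + 2 * (∫ y in Icc a (b + 1), |ρ y - g y|)
        + volume.real s * (2 * C * Real.exp (-1 / ε)) + ∫ x in s, |expAverage ε g x - g x| := by
  have hs_fin : volume s ≠ ⊤ := (measure_mono hsab).trans_lt measure_Icc_lt_top |>.ne
  have hs' : s ⊆ Icc a (b + 1) := hsab.trans (Icc_subset_Icc_right (by linarith))
  have hqf := measurable_expAverage (ε := ε) hf
  have hqg := measurable_expAverage (ε := ε) hg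
  have hqfC := abs_expAverage_le hε hf hfC
  have hqgC := abs_expAverage_le hε hg hgC
  have hfg : ∀ y, |f y - g y| ≤ 2 * C := fun y => by linarith [abs_sub (f y) (g y), hfC y, hgC y]
  have hcontract : ∫ x in s, |expAverage ε f x - expAverage ε g x|
      ≤ (∫ y in Icc a (b + 1), |f y - g y|) + volume.real s * (2 * C * Real.exp (-1 / ε)) :=
    (setIntegral_mono_on ((integrableOn_of_abs_le hqf hqfC hs_fin).sub
        (integrableOn_of_abs_le hqg hqgC hs_fin)).abs
      (integrableOn_expAverage hε (hf.sub hg).abs (fun y => (abs_abs _).trans_le (hfg y)) hs_fin)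
      hs fun x _ => abs_expAverage_sub_expAverage_le hε hf hg hfC hgC x).trans
    (setIntegral_expAverage_le hε (hf.sub hg).abs (fun y => abs_nonneg _) hfg zero_le_one hs hsab)
  have hgρ : ∫ x in s, |g x - ρ x| ≤ ∫ y in Icc a (b + 1), |ρ y - g y| := by
    simp_rw [abs_sub_comm (g _)]
    exact setIntegral_mono_set ((integrableOn_of_abs_le hρ hρC measure_Icc_lt_top.ne).sub
      (integrableOn_of_abs_le hg hgC measure_Icc_lt_top.ne)).abs
      (ae_of_all _ fun y => abs_nonneg _) hs'.eventuallyLE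
  linarith [setIntegral_abs_sub_le_add hqf hqg hρ hqfC hqgC hρC hs_fin,
    setIntegral_abs_sub_le_add hqg hg hρ hqgC hgC hρC hs_fin,
    setIntegral_abs_sub_le_add hf hρ hg hfC hρC hgC (s := Icc a (b + 1)) measure_Icc_lt_top.ne]

theorem exp_average_L1loc_convergence_general
    (R : ℝ)
    (ε : ℕ → ℝ) (hε : ∀ n, 0 < ε n) (hε0 : Tendsto ε atTop (nhds 0))
    (ρseq : ℕ → ℝ → ℝ) (ρ : ℝ → ℝ)
    (hm : ∀ n, Measurable (ρseq n)) (hρm : Measurable ρ)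
    (hrange : ∀ n y, ρseq n y ∈ Icc (0:ℝ) R)
    (hρrange : ∀ y, ρ y ∈ Icc (0:ℝ) R)
    (hconv : ∀ K : Set ℝ, IsCompact K →
      Tendsto (fun n => ∫ y in K, |ρseq n y - ρ y|) atTop (nhds 0))
    (q : ℕ → ℝ → ℝ)
    (hq : ∀ n x, q n x = ∫ y in Ioi x, (ε n)⁻¹ * Real.exp ((x - y) / ε n) * ρseq n y) :
    ∀ K : Set ℝ, IsCompact K →
      Tendsto (fun n => ∫ x in K, |q n x - ρ x|) atTop (nhds 0) := by
  intro K hK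
  have hεn : Tendsto ε atTop (𝓝[>] 0) := tendsto_nhdsWithin_iff.2 ⟨hε0, .of_forall hε⟩
  have hKab := subset_Icc_csInf_csSup hK.bddBelow hK.bddAbove
  set K' := Icc (sInf K) (sSup K + 1)
  refine tendsto_zero_of_forall_le_add (fun n => integral_nonneg fun _ => abs_nonneg _)
    fun δ hδ => ?_
  obtain ⟨g, hg_supp, hρg, hg, -⟩ := (integrableOn_of_abs_le hρm
    (fun y => abs_of_nonneg (hρrange y).1 ▸ (hρrange y).2) measure_Icc_lt_top.ne :
      IntegrableOn ρ K').exists_hasCompactSupport_integral_sub_le (half_pos hδ)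
  obtain ⟨Cg, hCg⟩ := hg.bounded_above_of_compact_support hg_supp
  set C := max R Cg
  have hgC : ∀ y, |g y| ≤ C := fun y => (hCg y).trans (le_max_right _ _)
  have hbound : ∀ {u : ℝ → ℝ}, (∀ y, u y ∈ Icc 0 R) → ∀ y, |u y| ≤ C := fun hu y =>
    (abs_of_nonneg (hu y).1 ▸ (hu y).2).trans (le_max_left _ _)
  refine ⟨fun n => (∫ y in K', |ρseq n y - ρ y|) + volume.real K * (2 * C * Real.exp (-1 / ε n))
    + ∫ x in K, |expAverage (ε n) g x - g x|, ?_, fun n => ?_⟩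
  · simpa using ((hconv K' isCompact_Icc).add
      ((((tendsto_exp_neg_div_nhdsGT_zero one_pos).comp hεn).const_mul (2 * C)).const_mul _)).add
      ((tendsto_setIntegral_abs_expAverage_sub hg hgC hK.measure_lt_top.ne).comp hεn)
  · have hqn : q n = expAverage (ε n) (ρseq n) := funext (hq n)
    simp_rw [Real.norm_eq_abs] at hρg
    rw [hqn]
    linarith [setIntegral_abs_expAverage_sub_le (hε n) (hm n) hρm hg.measurable
      (hbound (hrange n)) (hbound hρrange) hgC hK.measurableSet hKab]

/-- If `ρ_n → ρ` in `L¹_loc(ℝ)` with values in `[0,R]` and `ε_n → 0`, then the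
exponentially averaged densities `q_n` also converge to `ρ` in `L¹_loc(ℝ)`. -/
theorem exp_average_L1loc_convergence
    (R : ℝ) (hR : 0 < R)
    (ε : ℕ → ℝ) (hε : ∀ n, 0 < ε n) (hε0 : Tendsto ε atTop (nhds 0))
    (ρseq : ℕ → ℝ → ℝ) (ρ : ℝ → ℝ)
    (hm : ∀ n, Measurable (ρseq n)) (hρm : Measurable ρ)
    (hrange : ∀ n y, ρseq n y ∈ Icc (0:ℝ) R)
    (hρrange : ∀ y, ρ y ∈ Icc (0:ℝ) R)
    (hconv : ∀ K : Set ℝ, IsCompact K →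
      Tendsto (fun n => ∫ y in K, |ρseq n y - ρ y|) atTop (nhds 0))
    (q : ℕ → ℝ → ℝ)
    (hq : ∀ n x, q n x = ∫ y in Ioi x, (ε n)⁻¹ * Real.exp ((x - y) / ε n) * ρseq n y) :
    ∀ K : Set ℝ, IsCompact K →
      Tendsto (fun n => ∫ x in K, |q n x - ρ x|) atTop (nhds 0) :=
  exp_average_L1loc_convergence_general R ε hε hε0 ρseq ρ hm hρm hrange hρrange hconv q hq
end

section
/- Let f : ℝ → ℝ be bounded and measurable with bounded total variation TV(f). Then for every ε > 0, the exponentially weighted average q_ε[f](x) = ∫_x^∞ ε^{-1} e^{(x−y)/ε} f(y) dy has total variation at most that of f: TV(q_ε[f]) ≤ TV(f). -/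
/-!
The substitution `y = x + t` writes `q_ε[f](x) = ∫ f (x + t) dμ(t)` with `μ` the exponential
distribution of rate `ε⁻¹`, so `q_ε[f]` is a probability average of translates of `f`. For a
partition `x₀ ≤ ⋯ ≤ x_N`, the sum `∑ |q(x_i) - q(x_{i-1})|` is at most the `μ`-average over `t`
of `∑ |f(x_i + t) - f(x_{i-1} + t)|`, and each of these sums is at most `TV(f)`. A function of
finite variation is bounded and, as a difference of monotone functions, measurable, so its
translates are `μ`-integrable.
-/

open MeasureTheory Set ProbabilityTheory

theorem LocallyBoundedVariationOn.measurable {f : ℝ → ℝ}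
    (hf : LocallyBoundedVariationOn f univ) : Measurable f := by
  obtain ⟨p, q, hp, hq, rfl⟩ := hf.exists_monotoneOn_sub_monotoneOn
  exact (monotoneOn_univ.1 hp).measurable.sub (monotoneOn_univ.1 hq).measurable

theorem BoundedVariationOn.abs_le {f : ℝ → ℝ} (hf : BoundedVariationOn f univ) (x : ℝ) :
    |f x| ≤ |f 0| + (eVariationOn f univ).toReal := by
  have hdist := hf.dist_le (mem_univ x) (mem_univ 0)
  rw [Real.dist_eq] at hdist
  linarith [abs_sub_abs_le_abs_sub (f x) (f 0)]

theorem BoundedVariationOn.integrable_comp_const_add {f : ℝ → ℝ}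
    (hf : BoundedVariationOn f univ) (μ : Measure ℝ) [IsFiniteMeasure μ] (x : ℝ) :
    Integrable (fun t => f (x + t)) μ :=
  .of_bound
    (hf.locallyBoundedVariationOn.measurable.comp (measurable_const_add x)).aestronglyMeasurable
    _ (.of_forall fun t => hf.abs_le (x + t))

theorem eVariationOn_integral_comp_const_add_le (μ : Measure ℝ) [IsProbabilityMeasure μ]
    (f : ℝ → ℝ) : eVariationOn (fun x => ∫ t, f (x + t) ∂μ) univ ≤ eVariationOn f univ := by
  rcases eq_top_or_lt_top (eVariationOn f univ) with htop | hlt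
  · exact htop ▸ le_top
  have hf : BoundedVariationOn f univ := hlt.ne
  have hfm := hf.locallyBoundedVariationOn.measurable
  refine iSup_le fun ⟨n, u, hu, _⟩ => ?_
  calc ∑ i ∈ Finset.range n, edist (∫ t, f (u (i + 1) + t) ∂μ) (∫ t, f (u i + t) ∂μ)
      ≤ ∑ i ∈ Finset.range n, ∫⁻ t, edist (f (u (i + 1) + t)) (f (u i + t)) ∂μ :=
        Finset.sum_le_sum fun i _ => edist_integral_le_lintegral_edist
          (hf.integrable_comp_const_add μ _) (hf.integrable_comp_const_add μ _)
    _ = ∫⁻ t, ∑ i ∈ Finset.range n, edist (f (u (i + 1) + t)) (f (u i + t)) ∂μ :=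
        (lintegral_finsetSum _ fun i _ => by fun_prop).symm
    _ ≤ ∫⁻ _, eVariationOn f univ ∂μ :=
        lintegral_mono fun t => eVariationOn.sum_le (hu.add_const t) fun _ => mem_univ _
    _ = eVariationOn f univ := by simp

theorem integral_expMeasure {E : Type*} [NormedAddCommGroup E] [NormedSpace ℝ E]
    {r : ℝ} (hr : 0 ≤ r) (g : ℝ → E) :
    ∫ t, g t ∂expMeasure r = ∫ t in Ioi 0, (r * Real.exp (-(r * t))) • g t := by
  have hpdf : ∀ t, (exponentialPDF r t).toReal =
      if 0 ≤ t then r * Real.exp (-(r * t)) else 0 := by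
    intro t
    rw [exponentialPDF_eq, ENNReal.toReal_ofReal]
    split_ifs <;> positivity
  have hmeas : Measurable (exponentialPDF r) := (measurable_exponentialPDFReal r).ennreal_ofReal
  change ∫ t, g t ∂volume.withDensity (exponentialPDF r) = _
  rw [integral_withDensity_eq_integral_toReal_smul hmeas
      (.of_forall fun _ => ENNReal.ofReal_lt_top),
    ← integral_Ici_eq_integral_Ioi, ← setIntegral_eq_integral_of_forall_compl_eq_zero]
  · exact setIntegral_congr_fun measurableSet_Ici fun t ht => by
      rw [hpdf, if_pos (mem_Ici.1 ht)]
  · intro t ht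
    rw [hpdf, if_neg (mt mem_Ici.2 ht), zero_smul]

theorem setIntegral_Ioi_exp_mul_eq_integral_expMeasure {ε : ℝ} (hε : 0 < ε) (f : ℝ → ℝ)
    (x : ℝ) :
    ∫ y in Ioi x, ε⁻¹ * Real.exp ((x - y) / ε) * f y = ∫ t, f (x + t) ∂expMeasure ε⁻¹ := by
  rw [← (measurePreserving_add_left volume x).setIntegral_preimage_emb
      (measurableEmbedding_addLeft x),
    integral_expMeasure (inv_nonneg.2 hε.le), preimage_const_add_Ioi, sub_self]
  refine setIntegral_congr_fun measurableSet_Ioi fun t _ => ?_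
  rw [smul_eq_mul, sub_add_cancel_left, neg_div, div_eq_inv_mul]

theorem exp_average_variation_le_general
    (f : ℝ → ℝ)
    (ε : ℝ) (hε : 0 < ε)
    (q : ℝ → ℝ)
    (hq : ∀ x, q x = ∫ y in Ioi x, ε⁻¹ * Real.exp ((x - y) / ε) * f y) :
    eVariationOn q univ ≤ eVariationOn f univ := by
  have : IsProbabilityMeasure (expMeasure ε⁻¹) :=
    isProbabilityMeasure_expMeasure (inv_pos.2 hε)
  have hq' : q = fun x => ∫ t, f (x + t) ∂expMeasure ε⁻¹ :=
    funext fun x => (hq x).trans (setIntegral_Ioi_exp_mul_eq_integral_expMeasure hε f x)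
  exact hq' ▸ eVariationOn_integral_comp_const_add_le _ f

/-- The exponentially weighted average does not increase the total variation:
`TV(q_ε[f]) ≤ TV(f)`. -/
theorem exp_average_variation_le
    (f : ℝ → ℝ) (hfm : Measurable f) (hfb : ∃ M : ℝ, ∀ x, |f x| ≤ M)
    (hTV : eVariationOn f univ ≠ ⊤)
    (ε : ℝ) (hε : 0 < ε)
    (q : ℝ → ℝ)
    (hq : ∀ x, q x = ∫ y in Ioi x, ε⁻¹ * Real.exp ((x - y) / ε) * f y) :
    eVariationOn q univ ≤ eVariationOn f univ :=
  exp_average_variation_le_general f ε hε q hq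
end
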